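/- arXiv:1207.6734 — 2 statements merged into one kernel-verified Lean document; each statement's English description precedes it below -/
import Mathlib

section
/- For every M>1 there exist constants K>0 and δ>0 such that for all i≥1, all ℓ∈{1,…,d}, and all θ,θ', the partial derivative ∂C_i/∂θ_ℓ of the sliced U(1)^d gauge-invariant propagator satisfies |∂C_i/∂θ_ℓ (θ;θ')| ≤ K M^{(d-1)i} ∫ dλ e^{-δ M^i Σ_k |θ_k - θ'_k + λ|}. -/
open Real MeasureTheory

/-- The heat kernel on U(1) ≅ ℝ/2πℤ at time α (winding-number representation). -/
noncomputable def heatK (α θ : ℝ) : ℝ :=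
  ∑' n : ℤ, (1 / Real.sqrt (4 * π * α)) * Real.exp (-(θ + 2 * π * n) ^ 2 / (4 * α))

/-- Distance on the circle of circumference 2π. -/
noncomputable def circleDist (x : ℝ) : ℝ := sInf {y : ℝ | ∃ n : ℤ, y = |x - 2 * π * n|}

/-- The `i`-th slice of the gauge-averaged propagator of the U(1)^d TGFT. -/
noncomputable def slicedProp (d : ℕ) (m M : ℝ) (i : ℕ) (θ θ' : Fin d → ℝ) : ℝ :=
  ∫ α in (M ^ (-(2 : ℝ) * (i : ℝ)))..(M ^ (-(2 : ℝ) * ((i : ℝ) - 1))),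
    Real.exp (-α * m ^ 2) *
      ∫ lam in (0 : ℝ)..(2 * π), ∏ ℓ : Fin d, heatK α (θ ℓ - θ' ℓ + lam)

open Topology Filter Set

/-! Write `N = M ^ i`, so that the slice is `α N² ∈ [1, M²]`. Dominating the winding sum by a
theta sum gives `K_α(x) ≤ 10 α^{-1/2} e^{-|x|²/(32α)}` with `|x|` the distance on the circle,
and the mean value theorem applied term by term gives
`|K_α(x+h) - K_α(x)| ≤ 10 |h| α⁻¹ e^{h²/(8α)} e^{-|x|²/(32α)}`. On the slice
`e^{-ρ²/(32α)} ≤ e^{8M²} e^{-Nρ}`, so each undifferentiated factor of the product costs `N`,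
the differentiated one `N²`, and integrating over `α`, an interval of length at most `M²/N²`,
leaves `N^{d-1}`. The derivative is the limit of the difference quotients, whose bound
`e^{h²N²/8} · C` tends to `C`. -/

lemma hasSum_int_pow_natAbs {r : ℝ} (h0 : 0 ≤ r) (h1 : r < 1) :
    HasSum (fun n : ℤ => r ^ n.natAbs) ((1 + r) / (1 - r)) := by
  have hgeom := hasSum_geometric_of_lt_one h0 h1
  have hneg : HasSum (fun n : ℕ => r ^ (-(n + 1 : ℤ)).natAbs) ((1 - r)⁻¹ * r) := by
    refine (hgeom.mul_right r).congr_fun fun n => ?_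
    rw [Int.natAbs_neg, ← pow_succ]
    congr 1
  have hpos : HasSum (fun n : ℕ => r ^ (n : ℤ).natAbs) (1 - r)⁻¹ := by simpa using hgeom
  convert HasSum.of_nat_of_neg_add_one (f := fun n : ℤ => r ^ n.natAbs) hpos hneg using 1
  rw [div_eq_mul_inv]
  ring

lemma natAbs_le_sq (n : ℤ) : (n.natAbs : ℝ) ≤ (n : ℝ) ^ 2 := by
  rw [← sq_abs, ← Int.cast_abs, ← Nat.cast_natAbs]
  exact_mod_cast Nat.le_self_pow two_ne_zero _

lemma exp_neg_sq_add_le (x : ℝ) {c : ℝ} (hc : 0 < c) (n : ℤ) :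
    exp (-(x + 2 * π * n) ^ 2 / c) ≤ exp (x ^ 2 / c) * exp (-(2 * π ^ 2 / c)) ^ n.natAbs := by
  rw [← exp_nat_mul, ← exp_add, exp_le_exp, ← sub_nonneg]
  have key : 0 ≤ (x + 2 * π * n) ^ 2 + x ^ 2 - 2 * π ^ 2 * n.natAbs := by
    nlinarith [sq_nonneg (2 * x + 2 * π * n), pi_pos, natAbs_le_sq n]
  have : x ^ 2 / c + n.natAbs * -(2 * π ^ 2 / c) - -(x + 2 * π * n) ^ 2 / c
      = ((x + 2 * π * n) ^ 2 + x ^ 2 - 2 * π ^ 2 * n.natAbs) / c := by ring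
  rw [this]
  positivity

lemma summable_exp_neg_sq_add (x : ℝ) {c : ℝ} (hc : 0 < c) :
    Summable fun n : ℤ => exp (-(x + 2 * π * n) ^ 2 / c) := by
  have hr : exp (-(2 * π ^ 2 / c)) < 1 := Real.exp_lt_one_iff.2 (neg_lt_zero.2 (by positivity))
  exact .of_nonneg_of_le (fun n => (exp_pos _).le) (exp_neg_sq_add_le x hc)
    ((hasSum_int_pow_natAbs (exp_pos _).le hr).summable.mul_left _)

lemma pi_mul_natAbs_le_abs_add {x : ℝ} (hx : |x| ≤ π) (n : ℤ) :
    π * n.natAbs ≤ |x + 2 * π * n| := by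
  rcases eq_or_ne n 0 with rfl | hn
  · simp
  have h1 : (1 : ℝ) ≤ n.natAbs := by exact_mod_cast Int.natAbs_pos.2 hn
  have h2 : |2 * π * (n : ℝ)| = 2 * π * n.natAbs := by
    rw [abs_mul, abs_of_pos (by positivity), Nat.cast_natAbs, Int.cast_abs]
  have h3 := abs_sub_abs_le_abs_sub (2 * π * (n : ℝ)) (-x)
  rw [abs_neg, h2, sub_neg_eq_add, add_comm] at h3
  nlinarith [pi_pos]

lemma exp_neg_sq_add_le_of_abs_le {x c : ℝ} (hx : |x| ≤ π) (hc : 0 < c) (hc32 : c ≤ 32) (n : ℤ) :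
    exp (-(x + 2 * π * n) ^ 2 / c) ≤ exp (-(1 / 4)) ^ n.natAbs := by
  rw [← exp_nat_mul, exp_le_exp, mul_neg, neg_div, neg_le_neg_iff, le_div_iff₀ hc]
  have hsq : (π * n.natAbs) ^ 2 ≤ (x + 2 * π * n) ^ 2 := by
    rw [← sq_abs (x + 2 * π * n)]
    exact pow_le_pow_left₀ (by positivity) (pi_mul_natAbs_le_abs_add hx n) 2
  have hn : (n.natAbs : ℝ) ≤ (n.natAbs : ℝ) ^ 2 := by
    exact_mod_cast Nat.le_self_pow two_ne_zero _
  have hπ : 9 ≤ π ^ 2 := by nlinarith [pi_gt_three]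
  have h0 : (0 : ℝ) ≤ n.natAbs := Nat.cast_nonneg _
  nlinarith [mul_le_mul_of_nonneg_left hc32 h0,
    mul_le_mul_of_nonneg_right hπ (sq_nonneg (n.natAbs : ℝ))]

lemma tsum_exp_neg_sq_add_shift (x : ℝ) {c : ℝ} (k : ℤ) :
    ∑' n : ℤ, exp (-(x + 2 * π * k + 2 * π * n) ^ 2 / c)
      = ∑' n : ℤ, exp (-(x + 2 * π * n) ^ 2 / c) := by
  rw [← (Equiv.addLeft k).tsum_eq (fun n : ℤ => exp (-(x + 2 * π * n) ^ 2 / c))]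
  congr! 4 with n
  push_cast [Equiv.coe_addLeft]
  ring

lemma tsum_exp_neg_sq_add_le_ten (x : ℝ) {c : ℝ} (hc : 0 < c) (hc32 : c ≤ 32) :
    ∑' n : ℤ, exp (-(x + 2 * π * n) ^ 2 / c) ≤ 10 := by
  set x₀ := x - 2 * π * round (x / (2 * π))
  have hx₀ : |x₀| ≤ π := by
    have h := abs_sub_round (x / (2 * π))
    have : x₀ = (x / (2 * π) - round (x / (2 * π))) * (2 * π) := by
      field_simp [pi_pos.ne']
      ring
    rw [this, abs_mul, abs_of_pos (by positivity : (0 : ℝ) < 2 * π)]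
    nlinarith [pi_pos]
  have hr : exp (-(1 / 4)) ≤ 4 / 5 := by
    rw [exp_neg, inv_le_comm₀ (exp_pos _) (by norm_num)]
    linarith [add_one_le_exp (1 / 4 : ℝ)]
  have hgeom := hasSum_int_pow_natAbs (exp_pos (-(1 / 4))).le (by linarith)
  calc ∑' n : ℤ, exp (-(x + 2 * π * n) ^ 2 / c)
      = ∑' n : ℤ, exp (-(x₀ + 2 * π * n) ^ 2 / c) := by
        rw [← tsum_exp_neg_sq_add_shift x₀ (round (x / (2 * π)))]
        simp only [x₀, sub_add_cancel]
    _ ≤ (1 + exp (-(1 / 4))) / (1 - exp (-(1 / 4))) :=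
        hasSum_le (exp_neg_sq_add_le_of_abs_le hx₀ hc hc32)
          (summable_exp_neg_sq_add x₀ hc).hasSum hgeom
    _ ≤ 10 := by
        rw [div_le_iff₀ (by linarith)]
        linarith [exp_pos (-(1 / 4))]

lemma circleDist_nonneg (x : ℝ) : 0 ≤ circleDist x :=
  le_csInf ⟨_, 0, rfl⟩ fun _ ⟨_, hy⟩ => hy ▸ abs_nonneg _

lemma circleDist_le (x : ℝ) (n : ℤ) : circleDist x ≤ |x - 2 * π * n| :=
  csInf_le ⟨0, fun _ ⟨_, hy⟩ => hy ▸ abs_nonneg _⟩ ⟨n, rfl⟩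

lemma circleDist_sq_le (x : ℝ) (n : ℤ) : circleDist x ^ 2 ≤ (x + 2 * π * n) ^ 2 := by
  have h : circleDist x ≤ |x + 2 * π * n| := by simpa using circleDist_le x (-n)
  simpa using pow_le_pow_left₀ (circleDist_nonneg x) h 2

lemma circleDist_le_add_dist (x y : ℝ) : circleDist x ≤ circleDist y + dist x y :=
  sub_le_iff_le_add.1 <| le_csInf ⟨_, 0, rfl⟩ fun _ ⟨n, hz⟩ => by
    rw [hz, sub_le_iff_le_add, Real.dist_eq]
    calc circleDist x ≤ |x - 2 * π * n| := circleDist_le x n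
      _ ≤ |y - 2 * π * n| + |x - y| := by simpa using abs_add_le (y - 2 * π * n) (x - y)

lemma continuous_circleDist : Continuous circleDist :=
  (LipschitzWith.of_le_add circleDist_le_add_dist).continuous

lemma tsum_exp_neg_sq_add_le (x : ℝ) {c c' : ℝ} (hc : 0 < c) (hcc' : 2 * c ≤ c')
    (hc' : c' ≤ 32) :
    ∑' n : ℤ, exp (-(x + 2 * π * n) ^ 2 / c) ≤ 10 * exp (-circleDist x ^ 2 / c') := by
  have hc'0 : 0 < c' := by linarith
  have hterm (n : ℤ) : exp (-(x + 2 * π * n) ^ 2 / c)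
      ≤ exp (-circleDist x ^ 2 / c') * exp (-(x + 2 * π * n) ^ 2 / c') := by
    rw [← exp_add, exp_le_exp, ← add_div, div_le_div_iff₀ hc hc'0]
    nlinarith [circleDist_sq_le x n, sq_nonneg (x + 2 * π * n)]
  calc ∑' n : ℤ, exp (-(x + 2 * π * n) ^ 2 / c)
      ≤ ∑' n : ℤ, exp (-circleDist x ^ 2 / c') * exp (-(x + 2 * π * n) ^ 2 / c') :=
        (summable_exp_neg_sq_add x hc).tsum_le_tsum hterm
          ((summable_exp_neg_sq_add x hc'0).mul_left _)
    _ ≤ exp (-circleDist x ^ 2 / c') * 10 := by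
        rw [tsum_mul_left]
        exact mul_le_mul_of_nonneg_left (tsum_exp_neg_sq_add_le_ten x hc'0 hc') (exp_pos _).le
    _ = 10 * exp (-circleDist x ^ 2 / c') := mul_comm _ _

lemma heatK_eq (α x : ℝ) :
    heatK α x = 1 / √(4 * π * α) * ∑' n : ℤ, exp (-(x + 2 * π * n) ^ 2 / (4 * α)) :=
  tsum_mul_left

lemma heatK_nonneg (α x : ℝ) : 0 ≤ heatK α x :=
  tsum_nonneg fun _ => by positivity

lemma one_div_sqrt_four_pi_mul_le {α : ℝ} (hα : 0 < α) : 1 / √(4 * π * α) ≤ (√α)⁻¹ := by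
  rw [one_div]
  exact inv_anti₀ (sqrt_pos.2 hα) (sqrt_le_sqrt (by nlinarith [pi_gt_three]))

lemma heatK_le {α : ℝ} (hα0 : 0 < α) (hα1 : α ≤ 1) (x : ℝ) :
    heatK α x ≤ 10 * (√α)⁻¹ * exp (-circleDist x ^ 2 / (32 * α)) := by
  calc heatK α x
      ≤ (√α)⁻¹ * (10 * exp (-circleDist x ^ 2 / (32 * α))) := by
        rw [heatK_eq]
        exact mul_le_mul (one_div_sqrt_four_pi_mul_le hα0)
          (tsum_exp_neg_sq_add_le x (by positivity) (by linarith) (by linarith))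
          (tsum_nonneg fun _ => (exp_pos _).le) (by positivity)
    _ = 10 * (√α)⁻¹ * exp (-circleDist x ^ 2 / (32 * α)) := by ring

lemma abs_mul_exp_neg_sq_le {α : ℝ} (hα : 0 < α) (s : ℝ) :
    |s| * exp (-(s ^ 2 / (8 * α))) ≤ 2 * √α := by
  have hsq := sq_sqrt hα.le
  have hpos : 0 < 1 + s ^ 2 / (8 * α) := by positivity
  calc |s| * exp (-(s ^ 2 / (8 * α))) ≤ |s| / (1 + s ^ 2 / (8 * α)) := by
        rw [exp_neg, ← div_eq_mul_inv]
        exact div_le_div_of_nonneg_left (abs_nonneg s) hpos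
          (by linarith [add_one_le_exp (s ^ 2 / (8 * α))])
    _ ≤ 2 * √α := by
        rw [div_le_iff₀ hpos, mul_add, mul_one, ← sq_abs s]
        have : 2 * √α * (|s| ^ 2 / (8 * α)) = |s| ^ 2 / (4 * √α) := by
          field_simp
          rw [hsq]
          ring
        rw [this, ← sub_nonneg]
        have : 2 * √α + |s| ^ 2 / (4 * √α) - |s| = (|s| - 2 * √α) ^ 2 / (4 * √α) + √α := by
          field_simp
          ring
        rw [this]
        positivity

lemma abs_deriv_exp_neg_sq_le {α : ℝ} (hα : 0 < α) {y h u : ℝ} (hu : |u - y| ≤ |h|) :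
    |exp (-u ^ 2 / (4 * α)) * (-(2 * u) / (4 * α))|
      ≤ (√α)⁻¹ * exp (h ^ 2 / (8 * α)) * exp (-y ^ 2 / (16 * α)) := by
  have hsplit : exp (-u ^ 2 / (4 * α)) = exp (-(u ^ 2 / (8 * α))) * exp (-u ^ 2 / (8 * α)) := by
    rw [← exp_add]; ring_nf
  have hshift : exp (-u ^ 2 / (8 * α)) ≤ exp (h ^ 2 / (8 * α)) * exp (-y ^ 2 / (16 * α)) := by
    rw [← exp_add, exp_le_exp, div_add_div _ _ (by positivity) (by positivity),
      div_le_div_iff₀ (by positivity) (by positivity)]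
    have : (u - y) ^ 2 ≤ h ^ 2 := sq_le_sq.2 hu
    nlinarith [sq_nonneg (u + (u - y)), mul_pos hα hα]
  have hsqrt : 0 < √α := sqrt_pos.2 hα
  calc |exp (-u ^ 2 / (4 * α)) * (-(2 * u) / (4 * α))|
      = (|u| * exp (-(u ^ 2 / (8 * α)))) * exp (-u ^ 2 / (8 * α)) / (2 * α) := by
        rw [abs_mul, abs_of_pos (exp_pos _), abs_div, abs_neg, abs_mul, hsplit,
          abs_of_pos (by positivity : (0 : ℝ) < 4 * α), abs_two]
        ring
    _ ≤ (2 * √α) * (exp (h ^ 2 / (8 * α)) * exp (-y ^ 2 / (16 * α))) / (2 * α) := by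
        exact div_le_div_of_nonneg_right
          (mul_le_mul (abs_mul_exp_neg_sq_le hα u) hshift (exp_pos _).le (by positivity))
          (by positivity)
    _ = (√α)⁻¹ * exp (h ^ 2 / (8 * α)) * exp (-y ^ 2 / (16 * α)) := by
        field_simp
        rw [sq_sqrt hα.le]

lemma abs_exp_neg_sq_add_sub_le {α : ℝ} (hα : 0 < α) (y h : ℝ) :
    |exp (-(y + h) ^ 2 / (4 * α)) - exp (-y ^ 2 / (4 * α))|
      ≤ (√α)⁻¹ * exp (h ^ 2 / (8 * α)) * exp (-y ^ 2 / (16 * α)) * |h| := by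
  have hderiv (u : ℝ) : HasDerivAt (fun u => exp (-u ^ 2 / (4 * α)))
      (exp (-u ^ 2 / (4 * α)) * (-(2 * u) / (4 * α))) u := by
    simpa using (((hasDerivAt_pow 2 u).neg.div_const (4 * α)).exp)
  have hclose (u : ℝ) (hu : u ∈ uIcc y (y + h)) : |u - y| ≤ |h| := by
    rcases mem_uIcc.1 hu with ⟨h1, h2⟩ | ⟨h1, h2⟩ <;>
      rw [abs_le] <;> constructor <;> linarith [le_abs_self h, neg_abs_le h]
  simpa using (convex_uIcc y (y + h)).norm_image_sub_le_of_norm_hasDerivWithin_le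
    (fun u _ => (hderiv u).hasDerivWithinAt)
    (fun u hu => abs_deriv_exp_neg_sq_le hα (hclose u hu)) left_mem_uIcc right_mem_uIcc

lemma abs_heatK_add_sub_le {α : ℝ} (hα0 : 0 < α) (hα1 : α ≤ 1) (x h : ℝ) :
    |heatK α (x + h) - heatK α x|
      ≤ 10 * α⁻¹ * exp (h ^ 2 / (8 * α)) * exp (-circleDist x ^ 2 / (32 * α)) * |h| := by
  set C := (√α)⁻¹ * exp (h ^ 2 / (8 * α))
  have hsum (v : ℝ) := summable_exp_neg_sq_add v (by positivity : 0 < 4 * α)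
  have hdiff : ∑' n : ℤ, exp (-(x + h + 2 * π * n) ^ 2 / (4 * α))
        - ∑' n : ℤ, exp (-(x + 2 * π * n) ^ 2 / (4 * α))
      = ∑' n : ℤ, (exp (-((x + 2 * π * n) + h) ^ 2 / (4 * α))
        - exp (-(x + 2 * π * n) ^ 2 / (4 * α))) := by
    rw [← (hsum (x + h)).tsum_sub (hsum x)]
    congr! 5 with n
    ring
  have hbound : |∑' n : ℤ, (exp (-((x + 2 * π * n) + h) ^ 2 / (4 * α))
        - exp (-(x + 2 * π * n) ^ 2 / (4 * α)))|
      ≤ C * (∑' n : ℤ, exp (-(x + 2 * π * n) ^ 2 / (16 * α))) * |h| := by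
    rw [← tsum_mul_left, ← tsum_mul_right, ← Real.norm_eq_abs]
    exact tsum_of_norm_bounded
      (((summable_exp_neg_sq_add x (c := 16 * α) (by positivity)).mul_left C).mul_right |h|).hasSum
      fun n => (Real.norm_eq_abs _).trans_le (abs_exp_neg_sq_add_sub_le hα0 _ h)
  calc |heatK α (x + h) - heatK α x|
      ≤ (√α)⁻¹ * (C * (10 * exp (-circleDist x ^ 2 / (32 * α))) * |h|) := by
        rw [heatK_eq, heatK_eq, ← mul_sub, abs_mul, abs_of_nonneg (by positivity), hdiff]
        refine mul_le_mul (one_div_sqrt_four_pi_mul_le hα0) (hbound.trans ?_) (abs_nonneg _)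
          (by positivity)
        have := tsum_exp_neg_sq_add_le x (c := 16 * α) (c' := 32 * α) (by positivity)
          (by linarith) (by linarith)
        gcongr
    _ = 10 * α⁻¹ * exp (h ^ 2 / (8 * α)) * exp (-circleDist x ^ 2 / (32 * α)) * |h| := by
        have : (√α)⁻¹ * (√α)⁻¹ = α⁻¹ := by rw [← mul_inv, mul_self_sqrt hα0.le]
        rw [← this]
        ring

section

variable {α M N : ℝ}

lemma exp_neg_sq_div_le (hα : 0 < α) (hαM : α * N ^ 2 ≤ M ^ 2) (ρ : ℝ) :
    exp (-ρ ^ 2 / (32 * α)) ≤ exp (8 * M ^ 2) * exp (-(N * ρ)) := by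
  rw [← exp_add, exp_le_exp, neg_div, neg_le, neg_add, neg_neg, ← sub_eq_neg_add,
    le_div_iff₀ (by positivity)]
  nlinarith [sq_nonneg (ρ - 16 * α * N), mul_le_mul_of_nonneg_left hαM hα.le]

lemma inv_sqrt_le_of_one_le_mul_sq (hN : 0 < N) (hαN : 1 ≤ α * N ^ 2) : (√α)⁻¹ ≤ N := by
  have hα : 0 < α := by nlinarith
  rw [inv_le_comm₀ (sqrt_pos.2 hα) hN, le_sqrt (by positivity) hα.le, inv_pow,
    inv_le_iff_one_le_mul₀ (by positivity)]
  linarith [mul_comm α (N ^ 2)]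

lemma heatK_le_of_mem_slice (hN : 0 < N) (hαN : 1 ≤ α * N ^ 2)
    (hαM : α * N ^ 2 ≤ M ^ 2) (hα1 : α ≤ 1) (x : ℝ) :
    heatK α x ≤ 10 * exp (8 * M ^ 2) * N * exp (-(N * circleDist x)) := by
  have hα : 0 < α := by nlinarith
  calc heatK α x ≤ 10 * (√α)⁻¹ * exp (-circleDist x ^ 2 / (32 * α)) := heatK_le hα hα1 x
    _ ≤ 10 * N * (exp (8 * M ^ 2) * exp (-(N * circleDist x))) := by
        gcongr
        exacts [inv_sqrt_le_of_one_le_mul_sq hN hαN, exp_neg_sq_div_le hα hαM _]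
    _ = 10 * exp (8 * M ^ 2) * N * exp (-(N * circleDist x)) := by ring

lemma abs_heatK_add_sub_le_of_mem_slice (hN : 0 < N) (hαN : 1 ≤ α * N ^ 2)
    (hαM : α * N ^ 2 ≤ M ^ 2) (hα1 : α ≤ 1) (x h : ℝ) :
    |heatK α (x + h) - heatK α x|
      ≤ 10 * exp (8 * M ^ 2) * N ^ 2 * exp (h ^ 2 * N ^ 2 / 8) * |h| *
        exp (-(N * circleDist x)) := by
  have hα : 0 < α := by nlinarith
  have hinv : α⁻¹ ≤ N ^ 2 := by rw [inv_le_iff_one_le_mul₀' hα]; exact hαN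
  have hexp : h ^ 2 / (8 * α) ≤ h ^ 2 * N ^ 2 / 8 := by
    rw [div_le_div_iff₀ (by positivity) (by norm_num)]
    nlinarith [mul_le_mul_of_nonneg_left hαN (sq_nonneg h)]
  calc |heatK α (x + h) - heatK α x|
      ≤ 10 * α⁻¹ * exp (h ^ 2 / (8 * α)) * exp (-circleDist x ^ 2 / (32 * α)) * |h| :=
        abs_heatK_add_sub_le hα hα1 x h
    _ ≤ 10 * N ^ 2 * exp (h ^ 2 * N ^ 2 / 8) * (exp (8 * M ^ 2) * exp (-(N * circleDist x)))
          * |h| := by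
        gcongr
        exact exp_neg_sq_div_le hα hαM _
    _ = _ := by ring

end

lemma abs_prod_update_sub_le {ι : Type*} [Fintype ι] [DecidableEq ι] {f w : ℝ → ℝ} {a b : ℝ}
    (hf0 : ∀ y, 0 ≤ f y) (hf : ∀ y, f y ≤ a * w y) (x : ι → ℝ) (ℓ : ι) {t : ℝ}
    (hdiff : |f t - f (x ℓ)| ≤ b * w (x ℓ)) :
    |∏ k, f (Function.update x ℓ t k) - ∏ k, f (x k)|
      ≤ b * a ^ (Fintype.card ι - 1) * ∏ k, w (x k) := by
  have hrest : ∏ k ∈ Finset.univ.erase ℓ, f (x k)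
      ≤ a ^ (Fintype.card ι - 1) * ∏ k ∈ Finset.univ.erase ℓ, w (x k) := by
    rw [← Finset.card_univ, ← Finset.card_erase_of_mem (Finset.mem_univ ℓ), ← Finset.prod_const,
      ← Finset.prod_mul_distrib]
    exact Finset.prod_le_prod (fun k _ => hf0 _) fun k _ => hf _
  have hupdate : ∏ k, f (Function.update x ℓ t k) = f t * ∏ k ∈ Finset.univ.erase ℓ, f (x k) := by
    rw [← Finset.mul_prod_erase _ _ (Finset.mem_univ ℓ), Function.update_self]
    congr 1
    exact Finset.prod_congr rfl fun k hk => by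
      rw [Function.update_of_ne (Finset.ne_of_mem_erase hk)]
  rw [hupdate, ← Finset.mul_prod_erase _ _ (Finset.mem_univ ℓ), ← sub_mul, abs_mul,
    abs_of_nonneg (Finset.prod_nonneg fun k _ => hf0 _),
    ← Finset.mul_prod_erase _ (fun k => w (x k)) (Finset.mem_univ ℓ)]
  calc |f t - f (x ℓ)| * ∏ k ∈ Finset.univ.erase ℓ, f (x k)
      ≤ b * w (x ℓ) * (a ^ (Fintype.card ι - 1) * ∏ k ∈ Finset.univ.erase ℓ, w (x k)) :=
        mul_le_mul hdiff hrest (Finset.prod_nonneg fun k _ => hf0 _) ((abs_nonneg _).trans hdiff)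
    _ = _ := by ring

lemma continuousOn_heatK : ContinuousOn (fun p : ℝ × ℝ => heatK p.1 p.2) (Ioi 0 ×ˢ univ) := by
  rintro ⟨α₀, x₀⟩ ⟨hα₀, -⟩
  simp only [mem_Ioi] at hα₀
  set L := |x₀| + 1
  have hbox : ContinuousOn (fun p : ℝ × ℝ => heatK p.1 p.2)
      (Icc (α₀ / 2) (2 * α₀) ×ˢ Icc (-L) L) := by
    have hr : exp (-(2 * π ^ 2 / (4 * (2 * α₀)))) < 1 :=
      Real.exp_lt_one_iff.2 (neg_lt_zero.2 (by positivity))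
    refine continuousOn_tsum (u := fun n : ℤ => 1 / √(4 * π * (α₀ / 2)) *
        (exp (L ^ 2 / (4 * (α₀ / 2))) * exp (-(2 * π ^ 2 / (4 * (2 * α₀)))) ^ n.natAbs))
      (fun n => ?_) ((hasSum_int_pow_natAbs (exp_pos _).le hr).summable.mul_left _ |>.mul_left _)
      ?_
    · rintro ⟨α, x⟩ ⟨⟨hα, -⟩, -⟩
      have : 0 < α := by linarith
      exact ContinuousAt.continuousWithinAt (by fun_prop (disch := positivity))
    · rintro n ⟨α, x⟩ ⟨⟨hα1, hα2⟩, hx⟩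
      have hα : 0 < α := by linarith
      have hxL : x ^ 2 ≤ L ^ 2 := sq_le_sq' hx.1 hx.2
      rw [Real.norm_eq_abs, abs_of_nonneg (by positivity)]
      refine mul_le_mul ?_ ((exp_neg_sq_add_le x (by positivity) n).trans ?_) (exp_pos _).le
        (by positivity)
      all_goals gcongr
  exact (hbox.continuousAt (prod_mem_nhds (Icc_mem_nhds (by linarith) (by linarith))
    (Icc_mem_nhds (by linarith [neg_abs_le x₀]) (by linarith [le_abs_self x₀])))).continuousWithinAt

lemma update_sub_add_apply {ι : Type*} [DecidableEq ι] (θ θ' : ι → ℝ) (ℓ : ι) (h lam : ℝ) (k : ι) :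
    Function.update θ ℓ (θ ℓ + h) k - θ' k + lam
      = Function.update (fun k => θ k - θ' k + lam) ℓ (θ ℓ - θ' ℓ + lam + h) k := by
  rcases eq_or_ne k ℓ with rfl | hk
  · simp only [Function.update_self]
    ring
  · simp only [Function.update_of_ne hk]

section Integrals

variable {ι : Type*} [Fintype ι]

lemma continuous_prod_heatK {α : ℝ} (hα : 0 < α) (c : ι → ℝ) :
    Continuous fun lam => ∏ k, heatK α (c k + lam) :=
  continuous_finsetProd _ fun k _ => continuousOn_heatK.comp_continuous
    (f := fun lam => (α, c k + lam)) (by fun_prop) fun _ => ⟨hα, trivial⟩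

lemma continuousOn_integral_prod_heatK (c : ι → ℝ) (a b : ℝ) :
    ContinuousOn (fun α => ∫ lam in a..b, ∏ k, heatK α (c k + lam)) (Ioi 0) := by
  rw [continuousOn_iff_continuous_domRestrict]
  refine intervalIntegral.continuous_parametric_intervalIntegral_of_continuous'
    (f := fun (α : Ioi (0 : ℝ)) lam => ∏ k, heatK α (c k + lam)) ?_ a b
  exact continuous_finsetProd _ fun k _ => continuousOn_heatK.comp_continuous
    (f := fun p : Ioi (0 : ℝ) × ℝ => ((p.1 : ℝ), c k + p.2)) (by fun_prop) fun p => ⟨p.1.2, trivial⟩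

lemma abs_integral_prod_heatK_update_sub_le [DecidableEq ι] {α M N : ℝ} (hN : 0 < N)
    (hαN : 1 ≤ α * N ^ 2) (hαM : α * N ^ 2 ≤ M ^ 2) (hα1 : α ≤ 1)
    (θ θ' : ι → ℝ) (ℓ : ι) (h : ℝ) :
    |(∫ lam in (0 : ℝ)..(2 * π), ∏ k, heatK α (Function.update θ ℓ (θ ℓ + h) k - θ' k + lam))
        - ∫ lam in (0 : ℝ)..(2 * π), ∏ k, heatK α (θ k - θ' k + lam)|
      ≤ 10 * exp (8 * M ^ 2) * N ^ 2 * exp (h ^ 2 * N ^ 2 / 8) * |h| *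
          (10 * exp (8 * M ^ 2) * N) ^ (Fintype.card ι - 1) *
          ∫ lam in (0 : ℝ)..(2 * π), exp (-(N * ∑ k, circleDist (θ k - θ' k + lam))) := by
  have hα : 0 < α := by nlinarith
  have hint (c : ι → ℝ) := (continuous_prod_heatK hα c).intervalIntegrable (μ := volume) 0 (2 * π)
  rw [← intervalIntegral.integral_sub (hint fun k => Function.update θ ℓ (θ ℓ + h) k - θ' k)
    (hint fun k => θ k - θ' k), ← intervalIntegral.integral_const_mul, ← Real.norm_eq_abs]
  refine intervalIntegral.norm_integral_le_of_norm_le (by positivity)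
    (ae_of_all _ fun lam _ => ?_) (Continuous.intervalIntegrable (by
      have := continuous_circleDist
      fun_prop) _ _)
  simp only [update_sub_add_apply θ θ' ℓ h lam, Real.norm_eq_abs]
  refine (abs_prod_update_sub_le (heatK_nonneg α)
    (heatK_le_of_mem_slice hN hαN hαM hα1) _ ℓ
    (abs_heatK_add_sub_le_of_mem_slice hN hαN hαM hα1 _ h)).trans_eq ?_
  rw [← exp_sum, Finset.mul_sum]
  simp only [Finset.sum_neg_distrib]

end Integrals

section

variable {M : ℝ} {i : ℕ}

lemma rpow_neg_two_mul_mul_rpow_sq (hM : 0 < M) (s : ℝ) :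
    M ^ (-2 * s) * (M ^ s) ^ 2 = 1 := by
  rw [← rpow_natCast, ← rpow_mul hM.le, ← rpow_add hM,
    show -2 * s + s * (2 : ℕ) = 0 by push_cast; ring, rpow_zero]

lemma rpow_neg_two_mul_sub_one_mul_rpow_sq (hM : 0 < M) (s : ℝ) :
    M ^ (-2 * (s - 1)) * (M ^ s) ^ 2 = M ^ 2 := by
  rw [← rpow_natCast, ← rpow_mul hM.le, ← rpow_add hM,
    show -2 * (s - 1) + s * (2 : ℕ) = (2 : ℕ) by push_cast; ring, rpow_natCast]

lemma rpow_neg_two_mul_sub_one_le_one (hM : 1 < M) (hi : 1 ≤ i) : M ^ (-2 * ((i : ℝ) - 1)) ≤ 1 :=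
  rpow_le_one_of_one_le_of_nonpos hM.le (by nlinarith [(Nat.one_le_cast (α := ℝ)).2 hi])

lemma rpow_neg_two_mul_le_rpow_neg_two_mul_sub_one (hM : 1 < M) :
    M ^ (-2 * (i : ℝ)) ≤ M ^ (-2 * ((i : ℝ) - 1)) :=
  rpow_le_rpow_of_exponent_le hM.le (by linarith)

lemma one_le_mul_rpow_sq_of_le (hM : 0 < M) {α : ℝ} (hα : M ^ (-2 * (i : ℝ)) ≤ α) :
    1 ≤ α * (M ^ (i : ℝ)) ^ 2 :=
  rpow_neg_two_mul_mul_rpow_sq hM (i : ℝ) ▸ mul_le_mul_of_nonneg_right hα (sq_nonneg _)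

lemma mul_rpow_sq_le_sq_of_le (hM : 0 < M) {α : ℝ} (hα : α ≤ M ^ (-2 * ((i : ℝ) - 1))) :
    α * (M ^ (i : ℝ)) ^ 2 ≤ M ^ 2 :=
  rpow_neg_two_mul_sub_one_mul_rpow_sq hM (i : ℝ) ▸ mul_le_mul_of_nonneg_right hα (sq_nonneg _)

end

lemma intervalIntegrable_slicedProp_integrand {ι : Type*} [Fintype ι] (m : ℝ) {A B : ℝ}
    (hA : 0 < A) (hB : 0 < B) (c : ι → ℝ) :
    IntervalIntegrable (fun α => exp (-α * m ^ 2) *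
      ∫ lam in (0 : ℝ)..(2 * π), ∏ k, heatK α (c k + lam)) volume A B :=
  ContinuousOn.intervalIntegrable <| ContinuousOn.mul (by fun_prop) <|
    (continuousOn_integral_prod_heatK c _ _).mono fun _ hα => lt_of_lt_of_le (lt_min hA hB) hα.1

lemma abs_slicedProp_update_sub_le {d : ℕ} (m : ℝ) {M : ℝ} (hM : 1 < M) {i : ℕ} (hi : 1 ≤ i)
    (θ θ' : Fin d → ℝ) (ℓ : Fin d) (h : ℝ) :
    |slicedProp d m M i (Function.update θ ℓ (θ ℓ + h)) θ' - slicedProp d m M i θ θ'|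
      ≤ M ^ 2 * (10 * exp (8 * M ^ 2)) ^ d * (M ^ (i : ℝ)) ^ (d - 1) *
          exp (h ^ 2 * (M ^ (i : ℝ)) ^ 2 / 8) *
          (∫ lam in (0 : ℝ)..(2 * π),
            exp (-(M ^ (i : ℝ) * ∑ k, circleDist (θ k - θ' k + lam)))) * |h| := by
  obtain ⟨n, rfl⟩ : ∃ n, d = n + 1 := ⟨d - 1, by have := ℓ.pos; omega⟩
  have hM0 : 0 < M := by linarith
  set N := M ^ (i : ℝ)
  have hN : 0 < N := rpow_pos_of_pos hM0 _
  have hAB := rpow_neg_two_mul_le_rpow_neg_two_mul_sub_one (i := i) hM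
  have hA0 : 0 < M ^ (-2 * (i : ℝ)) := rpow_pos_of_pos hM0 _
  set Φ := 10 * exp (8 * M ^ 2) * N ^ 2 * exp (h ^ 2 * N ^ 2 / 8) * |h| *
    (10 * exp (8 * M ^ 2) * N) ^ n *
    ∫ lam in (0 : ℝ)..(2 * π), exp (-(N * ∑ k, circleDist (θ k - θ' k + lam)))
  have hΦ : 0 ≤ Φ := by
    have : 0 ≤ ∫ lam in (0 : ℝ)..(2 * π), exp (-(N * ∑ k, circleDist (θ k - θ' k + lam))) :=
      intervalIntegral.integral_nonneg (by positivity) fun _ _ => (exp_pos _).le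
    positivity
  have hpointwise (α : ℝ) (hα : α ∈ uIoc (M ^ (-2 * (i : ℝ))) (M ^ (-2 * ((i : ℝ) - 1)))) :
      ‖(exp (-α * m ^ 2) *
          ∫ lam in (0 : ℝ)..(2 * π), ∏ k, heatK α (Function.update θ ℓ (θ ℓ + h) k - θ' k + lam))
        - exp (-α * m ^ 2) * ∫ lam in (0 : ℝ)..(2 * π), ∏ k, heatK α (θ k - θ' k + lam)‖ ≤ Φ := by
    rw [uIoc_of_le hAB] at hα
    have hexp : exp (-α * m ^ 2) ≤ 1 :=
      exp_le_one_iff.2 (by nlinarith [hA0.trans hα.1, sq_nonneg m])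
    have hdiff := abs_integral_prod_heatK_update_sub_le hN
      (one_le_mul_rpow_sq_of_le hM0 hα.1.le) (mul_rpow_sq_le_sq_of_le hM0 hα.2)
      (hα.2.trans (rpow_neg_two_mul_sub_one_le_one hM hi)) θ θ' ℓ h
    rw [Fintype.card_fin, Nat.add_sub_cancel] at hdiff
    rw [← mul_sub, norm_mul, Real.norm_of_nonneg (exp_pos _).le, Real.norm_eq_abs]
    exact (mul_le_mul hexp hdiff (abs_nonneg _) zero_le_one).trans_eq (one_mul _)
  have hint (θ : Fin (n + 1) → ℝ) := intervalIntegrable_slicedProp_integrand m hA0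
    (hA0.trans_le hAB) fun k => θ k - θ' k
  unfold slicedProp
  rw [← intervalIntegral.integral_sub (hint _) (hint _), ← Real.norm_eq_abs]
  calc _ ≤ Φ * |M ^ (-2 * ((i : ℝ) - 1)) - M ^ (-2 * (i : ℝ))| :=
        intervalIntegral.norm_integral_le_of_norm_le_const hpointwise
    _ ≤ Φ * M ^ (-2 * ((i : ℝ) - 1)) := by
        rw [abs_of_nonneg (sub_nonneg.2 hAB)]
        exact mul_le_mul_of_nonneg_left (by linarith) hΦ
    _ = _ := by
        rw [eq_div_of_mul_eq (by positivity) (rpow_neg_two_mul_sub_one_mul_rpow_sq hM0 _),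
          Nat.add_sub_cancel]
        simp only [Φ]
        field_simp
        ring

lemma abs_deriv_le_of_abs_sub_le {f c : ℝ → ℝ} {t : ℝ} (hc : ContinuousAt c t)
    (h : ∀ s, |f s - f t| ≤ c s * |s - t|) : |deriv f t| ≤ c t := by
  have hslope : ∀ᶠ s in 𝓝[≠] t, |slope f t s| ≤ c s :=
    eventually_nhdsWithin_of_forall fun s hs => by
      rw [slope_def_field, abs_div, div_le_iff₀ (abs_pos.2 (sub_ne_zero.2 hs))]
      exact h s
  have hc' := hc.tendsto.mono_left (nhdsWithin_le_nhds (s := {t}ᶜ))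
  by_cases hf : DifferentiableAt ℝ f t
  · exact le_of_tendsto_of_tendsto (hasDerivAt_iff_tendsto_slope.1 hf.hasDerivAt).abs hc' hslope
  · -- `deriv f t = 0`, and `c t ≥ 0` as a limit of values bounding `|slope f t s|`
    rw [deriv_zero_of_not_differentiableAt hf, abs_zero]
    exact ge_of_tendsto hc' (hslope.mono fun s hs => (abs_nonneg _).trans hs)

theorem sliced_propagator_derivative_bound_general (d : ℕ) (m : ℝ) (M : ℝ) (hM : 1 < M) :
    ∃ K > (0 : ℝ), ∃ δ > (0 : ℝ), ∀ i : ℕ, 1 ≤ i → ∀ ℓ : Fin d, ∀ θ θ' : Fin d → ℝ,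
      |deriv (fun t : ℝ => slicedProp d m M i (Function.update θ ℓ t) θ') (θ ℓ)| ≤
        K * M ^ (((d : ℝ) - 1) * (i : ℝ)) *
          ∫ lam in (0 : ℝ)..(2 * π),
            Real.exp (-δ * M ^ (i : ℝ) * ∑ k : Fin d, circleDist (θ k - θ' k + lam)) := by
  refine ⟨M ^ 2 * (10 * exp (8 * M ^ 2)) ^ d, by positivity, 1, one_pos, fun i hi ℓ θ θ' => ?_⟩
  have hpow : M ^ (((d : ℝ) - 1) * (i : ℝ)) = (M ^ (i : ℝ)) ^ (d - 1) := by
    rw [← Nat.cast_pred ℓ.pos, mul_comm, rpow_mul (by linarith), rpow_natCast]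
  rw [hpow]
  simp only [neg_mul, one_mul]
  refine (abs_deriv_le_of_abs_sub_le (c := fun s => M ^ 2 * (10 * exp (8 * M ^ 2)) ^ d *
      (M ^ (i : ℝ)) ^ (d - 1) * exp ((s - θ ℓ) ^ 2 * (M ^ (i : ℝ)) ^ 2 / 8) *
      ∫ lam in (0 : ℝ)..(2 * π), exp (-(M ^ (i : ℝ) * ∑ k, circleDist (θ k - θ' k + lam))))
    (by fun_prop) fun s => ?_).trans_eq (by simp)
  simpa [Function.update_eq_self] using abs_slicedProp_update_sub_le m hM hi θ θ' ℓ (s - θ ℓ)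

/-- **Bound on the derivative of the sliced propagator.** For every `M > 1` there are
constants `K, δ > 0` such that for all `i ≥ 1`, all colors `ℓ`, and all `θ, θ'`,
`|∂C_i/∂θ_ℓ (θ;θ')| ≤ K M^{(d-1)i} ∫ dλ e^{-δ M^i Σ_k |θ_k - θ'_k + λ|}`. -/
theorem sliced_propagator_derivative_bound (d : ℕ) (m : ℝ) (hm : 0 < m) (M : ℝ) (hM : 1 < M) :
    ∃ K > (0 : ℝ), ∃ δ > (0 : ℝ), ∀ i : ℕ, 1 ≤ i → ∀ ℓ : Fin d, ∀ θ θ' : Fin d → ℝ,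
      |deriv (fun t : ℝ => slicedProp d m M i (Function.update θ ℓ t) θ') (θ ℓ)| ≤
        K * M ^ (((d : ℝ) - 1) * (i : ℝ)) *
          ∫ lam in (0 : ℝ)..(2 * π),
            Real.exp (-δ * M ^ (i : ℝ) * ∑ k : Fin d, circleDist (θ k - θ' k + lam)) :=
  sliced_propagator_derivative_bound_general d m M hM
end

section
/- Every melopole is tracial: if H is a connected single-vertex subgraph of a connected graph G whose k lines admit an ordering l₁,…,l_k such that {l₁,…,l_i}/{l₁,…,l_{i−1}} is a d-dipole for every 1≤i≤k, then H is contractible (any flat connection on H is trivial up to gauge: all holonomies around internal faces being the identity forces all line group elements to be the identity, after gauge-fixing a spanning tree) and G/H is connected. -/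
/-! Basic formal model of TGFT Feynman graphs: a rank-`d` TGFT graph is encoded through
its colored extension, a `(d+1)`-edge-colored graph.  Nodes are elements of `V`; for each
color `c : Fin (d+1)` the partial matching `edge c` pairs nodes (color `0` lines are the
propagator lines, colors `1,…,d` are the internal colored lines of the bubbles). -/
structure PreGraph (d : ℕ) (V : Type) where
  verts : Finset V
  edge : Fin (d + 1) → V → Option V

variable {d : ℕ} {V : Type}

/-- The axioms making the data a genuine `(d+1)`-colored graph: each `edge c` is a
symmetric fixed-point-free partial matching supported on the vertices, which is total
(a perfect matching) for every color `c ≠ 0`. -/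
def isColored (G : PreGraph d V) : Prop :=
  (∀ c a b, G.edge c a = some b → G.edge c b = some a) ∧
  (∀ c a b, G.edge c a = some b → a ∈ G.verts ∧ b ∈ G.verts) ∧
  (∀ c a, G.edge c a ≠ some a) ∧
  (∀ c : Fin (d + 1), c ≠ 0 → ∀ a ∈ G.verts, (G.edge c a).isSome)

/-- `p = (n, n̄)` is a (color-0, i.e. propagator) line of `G`. -/
def isLine (G : PreGraph d V) (p : V × V) : Prop := G.edge 0 p.1 = some p.2

/-- Reconnection of a matching after deletion of the two nodes `n, m`:
partners of `n` and `m` get joined to each other. -/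
def reconnect [DecidableEq V] (e : V → Option V) (n m : V) : V → Option V := fun a =>
  if a = n ∨ a = m then none
  else
    match e a with
    | none => none
    | some x =>
      if x = n then
        match e m with
        | none => none
        | some b => if b = n ∨ b = m then none else some b
      else if x = m then
        match e n with
        | none => none
        | some b => if b = n ∨ b = m then none else some b
      else some x

/-- Contraction of the color-0 line (dipole) with end nodes `n, m`: the two nodes are
deleted together with all colored lines joining them, and the remaining open half-lines
are reconnected according to their colors. -/
def contractLine [DecidableEq V] (G : PreGraph d V) (n m : V) : PreGraph d V :=
  ⟨G.verts \ {n, m}, fun c => reconnect (G.edge c) n m⟩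

/-- Successive contraction of a list of lines. -/
def contractList [DecidableEq V] : PreGraph d V → List (V × V) → PreGraph d V
  | G, [] => G
  | G, p :: r => contractList (contractLine G p.1 p.2) r

/-- One step along a face of color `c`: cross the color-`c` line then the color-0 line. -/
def faceStep (G : PreGraph d V) (c : Fin (d + 1)) (a : V) : Option V :=
  (G.edge c a).bind (G.edge 0)

/-- Iterated face steps. -/
def iterStep (G : PreGraph d V) (c : Fin (d + 1)) : ℕ → V → Option V
  | 0, a => some a
  | k + 1, a => (faceStep G c a).bind (iterStep G c k)

/-- The (oriented) color-0 line crossed by the face of color `c` right after node `b`. -/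
def crossedPair (G : PreGraph d V) (c : Fin (d + 1)) (b : V) : Option (V × V) :=
  match G.edge c b with
  | none => none
  | some x =>
    match G.edge 0 x with
    | none => none
    | some y => some (x, y)

/-- Two ordered pairs represent the same unordered line. -/
def pairMatch (p q : V × V) : Prop := p = q ∨ p = (q.2, q.1)

/-- The face of color `c` through node `a` closes with period `k` (an internal face of `G`). -/
def ClosedFace (G : PreGraph d V) (c : Fin (d + 1)) (a : V) (k : ℕ) : Prop :=
  0 < k ∧ iterStep G c k a = some a

/-- The face of color `c` (of period `k`, based at `a`) passes through the line `p`. -/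
def FaceCrosses (G : PreGraph d V) (c : Fin (d + 1)) (a : V) (k : ℕ) (p : V × V) : Prop :=
  ∃ j < k, ∃ b, iterStep G c j a = some b ∧
    ∃ xy, crossedPair G c b = some xy ∧ pairMatch xy p

/-- A closed face all of whose color-0 lines belong to the subgraph `S`
(an internal face of the subgraph `S`). -/
def ClosedFaceIn (G : PreGraph d V) (S : Finset (V × V)) (c : Fin (d + 1)) (a : V)
    (k : ℕ) : Prop :=
  ClosedFace G c a k ∧
    ∀ j < k, ∀ b, iterStep G c j a = some b →
      ∃ q ∈ S, ∃ xy, crossedPair G c b = some xy ∧ pairMatch xy q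

/-- Two lines of `S` lie on a common internal face of `S`: this realizes the line–face
incidence used to define connectedness of tensorial subgraphs. -/
def InternalFaceRel (G : PreGraph d V) (S : Finset (V × V)) (p q : V × V) : Prop :=
  ∃ c : Fin (d + 1), c ≠ 0 ∧ ∃ a k, ClosedFaceIn G S c a k ∧
    FaceCrosses G c a k p ∧ FaceCrosses G c a k q

/-- Connectedness of the subgraph `S` in the tensorial (face-incidence) sense. -/
def ConnectedSub (G : PreGraph d V) (S : Finset (V × V)) : Prop :=
  ∀ p ∈ S, ∀ q ∈ S, Relation.EqvGen (InternalFaceRel G S) p q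

/-- Two lines of `G` lie on a common closed face of `G`. -/
def WholeFaceRel (G : PreGraph d V) (p q : V × V) : Prop :=
  ∃ c : Fin (d + 1), c ≠ 0 ∧ ∃ a k, ClosedFace G c a k ∧
    FaceCrosses G c a k p ∧ FaceCrosses G c a k q

/-- Connectedness of `G` in the tensorial sense: the line–face incidence matrix does not
factorize into blocks, i.e. all pairs of lines are related through internal faces. -/
def GraphConnected (G : PreGraph d V) : Prop :=
  ∀ p q : V × V, isLine G p → isLine G q → Relation.EqvGen (WholeFaceRel G) p q

/-- Number of additional colored lines joining the two end nodes of a line: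
a line is a `k`-dipole iff this number is `k - 1`. -/
def shareCount [DecidableEq V] (G : PreGraph d V) (n m : V) : ℕ :=
  (Finset.univ.filter (fun c : Fin (d + 1) => c ≠ 0 ∧ G.edge c n = some m)).card

/-- Hepp-sector condition of a melopole: each line, in order, is (at least) a `d`-dipole
of the graph in which the previous lines have been contracted. -/
def MeloSteps [DecidableEq V] : PreGraph d V → List (V × V) → Prop
  | _, [] => True
  | G, p :: r => isLine G p ∧ d - 1 ≤ shareCount G p.1 p.2 ∧
      MeloSteps (contractLine G p.1 p.2) r

/-- Adjacency through the colored (non-0) lines: nodes of the same bubble (vertex). -/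
def ColoredAdj (G : PreGraph d V) (a b : V) : Prop :=
  ∃ c : Fin (d + 1), c ≠ 0 ∧ G.edge c a = some b

/-- Two nodes belong to the same bubble (interaction vertex). -/
def SameBubble (G : PreGraph d V) (a b : V) : Prop := Relation.EqvGen (ColoredAdj G) a b

/-- A melopole: a nonempty connected single-vertex (tadpole) subgraph whose lines admit
an ordering (Hepp sector) in which each successive quotient is a `d`-dipole. -/
def IsMelopole [DecidableEq V] (G : PreGraph d V) (S : Finset (V × V)) : Prop :=
  S.Nonempty ∧ (∀ p ∈ S, isLine G p) ∧
  (∀ p ∈ S, ∀ q ∈ S, SameBubble G p.1 q.1) ∧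
  (∀ p ∈ S, SameBubble G p.1 p.2) ∧
  ConnectedSub G S ∧
  ∃ l : List (V × V), l.Nodup ∧ l.toFinset = S ∧ MeloSteps G l

/-- Group element picked up when the face of color `c` crosses, right after node `b`, a
color-0 line of `S` carrying the discrete connection `h` (inverse if crossed backwards,
trivial otherwise). -/
def crossVal {Γ : Type} [Group Γ] [DecidableEq V] (G : PreGraph d V)
    (S : Finset (V × V)) (h : V × V → Γ) (c : Fin (d + 1)) (b : V) : Γ :=
  match crossedPair G c b with
  | none => 1
  | some xy => if xy ∈ S then h xy
               else if (xy.2, xy.1) ∈ S then (h (xy.2, xy.1))⁻¹ else 1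

/-- Holonomy of the discrete connection `h` along `k` steps of the face of color `c`
starting at node `b`. -/
def holFrom {Γ : Type} [Group Γ] [DecidableEq V] (G : PreGraph d V)
    (S : Finset (V × V)) (h : V × V → Γ) (c : Fin (d + 1)) : ℕ → V → Γ
  | 0, _ => 1
  | k + 1, b =>
    crossVal G S h c b *
      (match faceStep G c b with
       | none => 1
       | some b' => holFrom G S h c k b')

/-!
If `(n, m)` is a `d`-dipole with `d ≥ 2`, some colour `c ≠ 0` also joins `n` and `m`, so the face
of colour `c` through `m` has length one and crosses only `(n, m)`: flatness forces
`h (n, m) = 1`. Contracting `(n, m)` only removes the crossings of `(n, m)` from the faces, so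
every internal face of the quotient lifts to an internal face of the original graph with the same
holonomy, and induction along the Hepp sequence shows that every line carries `1`. In rank `1` a
melopole is a single line also joined by colour `1`, and in rank `0` there is none.

Faces avoiding `(n, m)` survive the contraction, and a face through `(n, m)` and another line also
crosses the line leaving `n` along the unique colour not shared by `n` and `m`; hence contracting a
`d`-dipole keeps the graph connected. Contractions of disjoint lines commute, so the order in which
the lines of the melopole are contracted does not matter.
-/

theorem pairMatch.refl (p : V × V) : pairMatch p p := Or.inl rfl

theorem pairMatch.swap (p : V × V) : pairMatch p (p.2, p.1) := Or.inr rfl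

theorem pairMatch.symm {p q : V × V} (h : pairMatch p q) : pairMatch q p := by
  rcases h with rfl | rfl
  exacts [pairMatch.refl _, pairMatch.swap _]

theorem pairMatch.trans {p q r : V × V} (h₁ : pairMatch p q) (h₂ : pairMatch q r) :
    pairMatch p r := by
  rcases h₁ with rfl | rfl <;> rcases h₂ with rfl | rfl <;> simp [pairMatch]

theorem not_pairMatch_of_fst_ne {p q : V × V} (h₁ : p.1 ≠ q.1) (h₂ : p.1 ≠ q.2) :
    ¬ pairMatch p q := by
  rintro (rfl | rfl) <;> simp_all

def LinesDisjoint (p q : V × V) : Prop :=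
  p.1 ≠ q.1 ∧ p.1 ≠ q.2 ∧ p.2 ≠ q.1 ∧ p.2 ≠ q.2

theorem LinesDisjoint.symm {p q : V × V} (h : LinesDisjoint p q) : LinesDisjoint q p :=
  ⟨h.1.symm, h.2.2.1.symm, h.2.1.symm, h.2.2.2.symm⟩

theorem eq_of_eqvGen {α β : Type*} {r : α → α → Prop} {f : α → β}
    (hf : ∀ a b, r a b → f a = f b) {a b : α} (hab : Relation.EqvGen r a b) : f a = f b :=
  congrArg (Quot.lift f hf) (Quot.eqvGen_sound hab)

theorem eqvGen_eq_of_eqvGen {α : Type*} {R : α → α → Prop} {x y : α}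
    (h : Relation.EqvGen R x y) : Relation.EqvGen R x = Relation.EqvGen R y :=
  funext fun _ => propext ⟨(h.symm _ _).trans _ _ _, h.trans _ _ _⟩

def IsMatching (e : V → Option V) : Prop :=
  (∀ a b, e a = some b → e b = some a) ∧ ∀ a, e a ≠ some a

theorem IsMatching.inj {e : V → Option V} (he : IsMatching e) {a b u : V}
    (ha : e a = some u) (hb : e b = some u) : a = b := by
  have := he.1 _ _ ha
  rw [he.1 _ _ hb] at this
  exact Option.some_inj.1 this.symm

section Reconnect

variable [DecidableEq V] {e : V → Option V} {n m : V}

theorem reconnect_eq_some_iff {a b : V} :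
    reconnect e n m a = some b ↔ a ≠ n ∧ a ≠ m ∧ b ≠ n ∧ b ≠ m ∧
      (e a = some b ∨ (e a = some n ∧ e m = some b) ∨ (e a = some m ∧ e n = some b)) := by
  unfold reconnect
  split_ifs <;> grind

theorem IsMatching.reconnect (he : IsMatching e) (hnm : n ≠ m) :
    IsMatching (reconnect e n m) := by
  obtain ⟨hsymm, hirr⟩ := he
  refine ⟨fun a b h => ?_, fun a h => ?_⟩ <;> rw [reconnect_eq_some_iff] at * <;> grind

theorem reconnect_reconnect_comm (he : IsMatching e) {n' m' : V}
    (hnm : n ≠ m) (hnm' : n' ≠ m') (h₁ : n ≠ n') (h₂ : n ≠ m') (h₃ : m ≠ n')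
    (h₄ : m ≠ m') :
    reconnect (reconnect e n m) n' m' = reconnect (reconnect e n' m') n m := by
  obtain ⟨hsymm, hirr⟩ := he
  funext a
  refine Option.ext fun b => ?_
  simp only [reconnect_eq_some_iff]
  grind

end Reconnect

section ColoredGraph

variable {G : PreGraph d V} {c : Fin (d + 1)} {n m : V}

theorem isColored.isMatching (hG : isColored G) (c : Fin (d + 1)) : IsMatching (G.edge c) :=
  ⟨hG.1 c, hG.2.2.1 c⟩

theorem isColored.symm (hG : isColored G) {a b : V}
    (h : G.edge c a = some b) : G.edge c b = some a :=
  hG.1 c a b h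

theorem isColored.inj (hG : isColored G) {a b u : V}
    (ha : G.edge c a = some u) (hb : G.edge c b = some u) : a = b :=
  (hG.isMatching c).inj ha hb

theorem isColored.ne (hG : isColored G) {a b : V}
    (h : G.edge c a = some b) : a ≠ b := by
  rintro rfl
  exact hG.2.2.1 c a h

theorem isColored.exists_edge (hG : isColored G) (hc : c ≠ 0) {a b : V}
    (h : G.edge 0 a = some b) : ∃ x, G.edge c a = some x :=
  Option.isSome_iff_exists.1 (hG.2.2.2 c hc a (hG.2.1 0 a b h).1)

theorem faceStep_eq_some_iff {a b : V} :
    faceStep G c a = some b ↔ ∃ x, G.edge c a = some x ∧ G.edge 0 x = some b := by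
  simp [faceStep, Option.bind_eq_some_iff]

theorem crossedPair_eq_some_iff {a : V} {xy : V × V} :
    crossedPair G c a = some xy ↔ G.edge c a = some xy.1 ∧ G.edge 0 xy.1 = some xy.2 := by
  unfold crossedPair
  split <;> [skip; split] <;> grind

theorem faceStep_eq_map_crossedPair (c : Fin (d + 1)) (a : V) :
    faceStep G c a = (crossedPair G c a).map Prod.snd := by
  unfold faceStep crossedPair
  split <;> [skip; split] <;> simp_all

theorem exists_crossedPair_of_faceStep {a b : V} (h : faceStep G c a = some b) :
    ∃ xy, crossedPair G c a = some xy ∧ xy.2 = b := by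
  rwa [faceStep_eq_map_crossedPair, Option.map_eq_some_iff] at h

theorem faceStep_of_crossedPair {a : V} {xy : V × V} (h : crossedPair G c a = some xy) :
    faceStep G c a = some xy.2 := by
  rw [faceStep_eq_map_crossedPair, h, Option.map_some]

theorem exists_pairMatch_of_crossedPair (hG : isColored G) {x b : V} {xy : V × V}
    (hxy : crossedPair G c x = some xy) (hb : b = xy.1 ∨ b = xy.2) :
    ∃ w, G.edge 0 b = some w ∧ pairMatch xy (b, w) := by
  obtain ⟨-, h0⟩ := crossedPair_eq_some_iff.1 hxy
  rcases hb with rfl | rfl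
  exacts [⟨_, h0, pairMatch.refl _⟩, ⟨_, hG.symm h0, pairMatch.swap _⟩]

theorem pairMatch_of_crossedPair_snd (hG : isColored G) (hnm : G.edge 0 n = some m)
    {a : V} {xy : V × V} (hxy : crossedPair G c a = some xy)
    (h : xy.2 = n ∨ xy.2 = m) : pairMatch xy (n, m) := by
  obtain ⟨-, h0⟩ := crossedPair_eq_some_iff.1 hxy
  rcases h with h | h <;> rw [h] at h0
  · exact Or.inr (Prod.ext (hG.inj h0 (hG.symm hnm)) h)
  · exact Or.inl (Prod.ext (hG.inj h0 hnm) h)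

theorem crossedPair_ne_of_faceStep_mem (hG : isColored G) (hnm : G.edge 0 n = some m)
    {a b : V} {xy : V × V} (han : a ≠ n) (ham : a ≠ m)
    (hb : faceStep G c a = some b) (hbnm : b = n ∨ b = m) (hxy : crossedPair G c b = some xy) :
    (xy.1 ≠ n ∧ xy.1 ≠ m) ∧ xy.2 ≠ n ∧ xy.2 ≠ m := by
  obtain ⟨x, hx, hxb⟩ := faceStep_eq_some_iff.1 hb
  rw [crossedPair_eq_some_iff] at hxy
  have := hG.symm hnm
  have hsymm : ∀ c' (u v : V), G.edge c' u = some v → G.edge c' v = some u := hG.1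
  have hirr : ∀ c' (u : V), G.edge c' u ≠ some u := hG.2.2.1
  have hinj : ∀ c' (u v w : V), G.edge c' u = some w → G.edge c' v = some w → u = v :=
    fun _ _ _ _ => hG.inj
  grind

theorem eq_of_sameBubble_rank_zero {G : PreGraph 0 V} {a b : V} (h : SameBubble G a b) :
    a = b := by
  refine eq_of_eqvGen (f := id) (fun x y ⟨c, hc, _⟩ => ?_) h
  exact absurd (Fin.fin_one_eq_zero c) hc

theorem sameBubble_rank_one {G : PreGraph 1 V} (hG : isColored G) {a b : V}
    (h : SameBubble G a b) : a = b ∨ G.edge 1 a = some b := by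
  induction h with
  | rel x y hxy =>
    obtain ⟨c, hc, hcy⟩ := hxy
    fin_cases c
    exacts [absurd rfl hc, Or.inr hcy]
  | refl => exact Or.inl rfl
  | symm x y _ ih => exact ih.imp Eq.symm hG.symm
  | trans x y z _ _ ih₁ ih₂ =>
    rcases ih₁ with rfl | h₁
    · exact ih₂
    · rcases ih₂ with rfl | h₂
      · exact Or.inr h₁
      · exact Or.inl (hG.inj h₁ (hG.symm h₂))

end ColoredGraph

def WalkCrosses (G : PreGraph d V) (c : Fin (d + 1)) (a : V) (k : ℕ) (xy : V × V) : Prop :=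
  ∃ j < k, ∃ x, iterStep G c j a = some x ∧ crossedPair G c x = some xy

section Walks

variable {G : PreGraph d V} {c : Fin (d + 1)} {n m : V}

theorem iterStep_add (s t : ℕ) (a : V) :
    iterStep G c (s + t) a = (iterStep G c s a).bind (iterStep G c t) := by
  induction s generalizing a with
  | zero => simp [iterStep]
  | succ s ih =>
    rw [Nat.add_right_comm]
    cases h : faceStep G c a <;> simp [iterStep, h, ih]

theorem iterStep_succ_of_faceStep {k : ℕ} {a b : V} (h : faceStep G c a = some b) :
    iterStep G c (k + 1) a = iterStep G c k b := by
  simp [iterStep, h]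

theorem iterStep_succ_eq_some_iff {k : ℕ} {a b : V} :
    iterStep G c (k + 1) a = some b ↔
      ∃ a', faceStep G c a = some a' ∧ iterStep G c k a' = some b :=
  Option.bind_eq_some_iff

theorem iterStep_succ_eq_some_iff' {k : ℕ} {a b : V} :
    iterStep G c (k + 1) a = some b ↔
      ∃ z, iterStep G c k a = some z ∧ faceStep G c z = some b := by
  rw [iterStep_add, Option.bind_eq_some_iff]
  simp [iterStep]

theorem walkCrosses_succ_iff {k : ℕ} {a b : V} {xy : V × V} (h : faceStep G c a = some b) :
    WalkCrosses G c a (k + 1) xy ↔ crossedPair G c a = some xy ∨ WalkCrosses G c b k xy := by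
  constructor
  · rintro ⟨_ | j, hj, x, hx, hxy⟩
    · cases hx
      exact Or.inl hxy
    · rw [iterStep_succ_of_faceStep h] at hx
      exact Or.inr ⟨j, by omega, x, hx, hxy⟩
  · rintro (hxy | ⟨j, hj, x, hx, hxy⟩)
    · exact ⟨0, by omega, a, rfl, hxy⟩
    · exact ⟨j + 1, by omega, x, by rwa [iterStep_succ_of_faceStep h], hxy⟩

theorem faceCrosses_iff {a : V} {k : ℕ} {p : V × V} :
    FaceCrosses G c a k p ↔ ∃ xy, WalkCrosses G c a k xy ∧ pairMatch xy p := by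
  constructor
  · rintro ⟨j, hj, x, hx, xy, hxy, hp⟩
    exact ⟨xy, ⟨j, hj, x, hx, hxy⟩, hp⟩
  · rintro ⟨xy, ⟨j, hj, x, hx, hxy⟩, hp⟩
    exact ⟨j, hj, x, hx, xy, hxy, hp⟩

section Closed

variable {k : ℕ} {a : V}

theorem iterStep_mul (hk : iterStep G c k a = some a) (q : ℕ) :
    iterStep G c (k * q) a = some a := by
  induction q with
  | zero => rfl
  | succ q ih => rw [Nat.mul_succ, iterStep_add, ih, Option.bind_some, hk]

theorem iterStep_mod (hk : iterStep G c k a = some a) (j : ℕ) :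
    iterStep G c j a = iterStep G c (j % k) a := by
  conv_lhs => rw [← Nat.div_add_mod j k, iterStep_add, iterStep_mul hk, Option.bind_some]

theorem iterStep_period_of_mem (hk : iterStep G c k a = some a) {j : ℕ} {b : V}
    (hb : iterStep G c j a = some b) : iterStep G c k b = some b := by
  have := iterStep_add (G := G) (c := c) j k a
  rwa [Nat.add_comm, iterStep_add, hk, Option.bind_some, hb, Option.bind_some, eq_comm] at this

theorem iterStep_return (hk0 : 0 < k) (hk : iterStep G c k a = some a) {j : ℕ} {b : V}
    (hb : iterStep G c j a = some b) : iterStep G c ((k - 1) * j) b = some a := by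
  have := iterStep_add (G := G) (c := c) j ((k - 1) * j) a
  have hkj : j + (k - 1) * j = k * j := by
    obtain ⟨k, rfl⟩ := Nat.exists_eq_add_of_lt hk0
    simp only [Nat.add_sub_cancel]; ring
  rwa [hb, Option.bind_some, hkj, iterStep_mul hk, eq_comm] at this

theorem walkCrosses_of_mem (hk0 : 0 < k) (hk : iterStep G c k a = some a) {j : ℕ} {x : V}
    {xy : V × V} (hx : iterStep G c j a = some x) (hxy : crossedPair G c x = some xy) :
    WalkCrosses G c a k xy :=
  ⟨j % k, Nat.mod_lt j hk0, x, by rwa [← iterStep_mod hk], hxy⟩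

theorem WalkCrosses.of_mem (hk0 : 0 < k) (hk : iterStep G c k a = some a) {j : ℕ} {b : V}
    (hb : iterStep G c j a = some b) {xy : V × V} (h : WalkCrosses G c a k xy) :
    WalkCrosses G c b k xy := by
  obtain ⟨i, -, x, hx, hxy⟩ := h
  refine walkCrosses_of_mem hk0 (iterStep_period_of_mem hk hb) (j := (k - 1) * j + i) ?_ hxy
  rw [iterStep_add, iterStep_return hk0 hk hb, Option.bind_some, hx]

theorem exists_crossedPair_of_mem (hk0 : 0 < k) (hk : iterStep G c k a = some a) {j : ℕ}
    {x : V} (hx : iterStep G c j a = some x) : ∃ xy, crossedPair G c x = some xy := by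
  have hx' := iterStep_period_of_mem hk hx
  rw [← Nat.succ_pred_eq_of_pos hk0, iterStep_succ_eq_some_iff] at hx'
  obtain ⟨y, hy, -⟩ := hx'
  obtain ⟨xy, hxy, -⟩ := exists_crossedPair_of_faceStep hy
  exact ⟨xy, hxy⟩

theorem crossedPair_eq_of_faceStep_self (hk0 : 0 < k) (hk : iterStep G c k a = some a)
    {j : ℕ} {x : V} (hx : iterStep G c j a = some x) (hfix : faceStep G c x = some x)
    {xy : V × V} (h : WalkCrosses G c a k xy) : crossedPair G c x = some xy := by
  have hstay : ∀ t, iterStep G c t x = some x := fun t => by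
    induction t with
    | zero => rfl
    | succ t ih => rwa [iterStep_succ_of_faceStep hfix]
  have hax : x = a := by simpa [hstay] using iterStep_return hk0 hk hx
  obtain ⟨i, -, y, hy, hxy⟩ := h
  rw [← hax, hstay, Option.some_inj] at hy
  rwa [hy]

-- The nodes visited by a closed face are closed under the colour-`c` matching.
theorem WalkCrosses.exists_of_edge (hG : isColored G) (hk0 : 0 < k)
    (hk : iterStep G c k a = some a) {xy : V × V} (h : WalkCrosses G c a k xy) {u v : V}
    (hu : u = xy.1 ∨ u = xy.2) (hv : G.edge c u = some v) :
    ∃ xy', WalkCrosses G c a k xy' ∧ (v = xy'.1 ∨ v = xy'.2) := by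
  obtain ⟨j, -, x, hx, hxy⟩ := h
  obtain ⟨hcx, -⟩ := crossedPair_eq_some_iff.1 hxy
  rcases hu with rfl | rfl
  · obtain rfl : v = x := Option.some_inj.1 (hv.symm.trans (hG.symm hcx))
    have hper := iterStep_period_of_mem hk hx
    rw [← Nat.succ_pred_eq_of_pos hk0, iterStep_succ_eq_some_iff'] at hper
    obtain ⟨z, hz, hzv⟩ := hper
    obtain ⟨xy', hxy', rfl⟩ := exists_crossedPair_of_faceStep hzv
    refine ⟨xy', walkCrosses_of_mem hk0 hk (j := j + k.pred) ?_ hxy', Or.inr rfl⟩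
    rw [iterStep_add, hx, Option.bind_some, hz]
  · have hy : iterStep G c (j + 1) a = some xy.2 :=
      iterStep_succ_eq_some_iff'.2 ⟨x, hx, faceStep_of_crossedPair hxy⟩
    obtain ⟨xy', hxy'⟩ := exists_crossedPair_of_mem hk0 hk hy
    exact ⟨xy', walkCrosses_of_mem hk0 hk hy hxy',
      Or.inl (Option.some_inj.1 (hv.symm.trans (crossedPair_eq_some_iff.1 hxy').1))⟩

theorem pairMatch_of_walkCrosses_of_shared (hG : isColored G) (hnm : G.edge 0 n = some m)
    (hshared : G.edge c n = some m) (hk0 : 0 < k) (hk : iterStep G c k a = some a)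
    {xy₀ : V × V} (hxy₀ : WalkCrosses G c a k xy₀) (hL : pairMatch xy₀ (n, m))
    {xy : V × V} (hxy : WalkCrosses G c a k xy) : pairMatch xy (n, m) := by
  obtain ⟨j, -, x, hx, hx₀⟩ := hxy₀
  have hedge := (crossedPair_eq_some_iff.1 hx₀).1
  rcases hL with rfl | rfl
  · obtain rfl : x = m := hG.inj hedge (hG.symm hshared)
    have hloop : crossedPair G c x = some (n, x) :=
      crossedPair_eq_some_iff.2 ⟨hG.symm hshared, hnm⟩
    rw [crossedPair_eq_of_faceStep_self hk0 hk hx (faceStep_of_crossedPair hloop) hxy] at hloop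
    exact Option.some_inj.1 hloop ▸ pairMatch.refl _
  · obtain rfl : x = n := hG.inj hedge hshared
    have hloop : crossedPair G c x = some (m, x) :=
      crossedPair_eq_some_iff.2 ⟨hshared, hG.symm hnm⟩
    rw [crossedPair_eq_of_faceStep_self hk0 hk hx (faceStep_of_crossedPair hloop) hxy] at hloop
    exact Option.some_inj.1 hloop ▸ pairMatch.swap _

theorem exists_free_line_of_walkCrosses (hG : isColored G) (hnm : G.edge 0 n = some m)
    (hc : c ≠ 0) (hk0 : 0 < k) (hk : iterStep G c k a = some a)
    {xy₀ : V × V} (hxy₀ : WalkCrosses G c a k xy₀) (hL : pairMatch xy₀ (n, m))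
    {r : V × V} (hr : WalkCrosses G c a k r) (hrL : ¬ pairMatch r (n, m)) :
    ∃ b w, G.edge c n = some b ∧ b ≠ m ∧ G.edge 0 b = some w ∧
      ∃ xy, WalkCrosses G c a k xy ∧ pairMatch xy (b, w) := by
  obtain ⟨b, hb⟩ := hG.exists_edge hc hnm
  have hbm : b ≠ m := by
    rintro rfl
    exact hrL (pairMatch_of_walkCrosses_of_shared hG hnm hb hk0 hk hxy₀ hL hr)
  have hn : n = xy₀.1 ∨ n = xy₀.2 := by rcases hL with rfl | rfl <;> simp
  obtain ⟨xy, hW, hbxy⟩ := hxy₀.exists_of_edge hG hk0 hk hn hb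
  obtain ⟨-, -, x, -, hxy⟩ := id hW
  obtain ⟨w, hw, hp⟩ := exists_pairMatch_of_crossedPair hG hxy hbxy
  exact ⟨b, w, hb, hbm, hw, xy, hW, hp⟩

end Closed

theorem closedFaceIn_iff {S : Finset (V × V)} {a : V} {k : ℕ} :
    ClosedFaceIn G S c a k ↔
      ClosedFace G c a k ∧ ∀ xy, WalkCrosses G c a k xy → ∃ q ∈ S, pairMatch xy q := by
  constructor
  · refine fun ⟨hcf, hS⟩ => ⟨hcf, ?_⟩
    rintro xy ⟨j, hj, x, hx, hxy⟩
    obtain ⟨q, hq, xy', hxy', hp⟩ := hS j hj x hx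
    obtain rfl := Option.some_inj.1 (hxy.symm.trans hxy')
    exact ⟨q, hq, hp⟩
  · refine fun ⟨⟨hk0, hk⟩, hS⟩ => ⟨⟨hk0, hk⟩, fun j hj x hx => ?_⟩
    obtain ⟨xy, hxy⟩ := exists_crossedPair_of_mem hk0 hk hx
    obtain ⟨q, hq, hp⟩ := hS xy ⟨j, hj, x, hx, hxy⟩
    exact ⟨q, hq, xy, hxy, hp⟩

end Walks

section Contraction

variable [DecidableEq V] {G : PreGraph d V} {n m : V} {c : Fin (d + 1)}

theorem contractLine_edge :
    (contractLine G n m).edge c = reconnect (G.edge c) n m := rfl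

theorem mem_verts_contractLine {a : V} :
    a ∈ (contractLine G n m).verts ↔ a ∈ G.verts ∧ a ≠ n ∧ a ≠ m := by
  simp [contractLine, not_or]

theorem isColored.contractLine (hG : isColored G) (hnm : G.edge 0 n = some m) :
    isColored (contractLine G n m) := by
  have hne := hG.ne hnm
  obtain ⟨hn, hm⟩ := hG.2.1 0 n m hnm
  refine ⟨fun c => ((hG.isMatching c).reconnect hne).1, fun c a b h => ?_,
    fun c => ((hG.isMatching c).reconnect hne).2, fun c hc a ha => ?_⟩
  · rw [contractLine_edge, reconnect_eq_some_iff] at h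
    simp only [mem_verts_contractLine]
    rcases h with ⟨_, _, _, _, h | ⟨h, h'⟩ | ⟨h, h'⟩⟩
    · exact ⟨⟨(hG.2.1 c a b h).1, by tauto⟩, (hG.2.1 c a b h).2, by tauto⟩
    · exact ⟨⟨(hG.2.1 c a n h).1, by tauto⟩, (hG.2.1 c m b h').2, by tauto⟩
    · exact ⟨⟨(hG.2.1 c a m h).1, by tauto⟩, (hG.2.1 c n b h').2, by tauto⟩
  · obtain ⟨haV, han, ham⟩ := mem_verts_contractLine.1 ha
    obtain ⟨x, hx⟩ := Option.isSome_iff_exists.1 (hG.2.2.2 c hc a haV)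
    obtain ⟨y, hy⟩ := Option.isSome_iff_exists.1 (hG.2.2.2 c hc n hn)
    obtain ⟨z, hz⟩ := Option.isSome_iff_exists.1 (hG.2.2.2 c hc m hm)
    have := hG.symm hx; have := hG.symm hy; have := hG.symm hz
    have := hG.ne hx; have := hG.ne hy; have := hG.ne hz
    rw [Option.isSome_iff_exists, contractLine_edge]
    simp only [reconnect_eq_some_iff]
    by_cases hxn : x = n
    · exact ⟨z, by grind⟩
    · by_cases hxm : x = m
      · exact ⟨y, by grind⟩
      · exact ⟨x, by grind⟩

theorem isLine_of_isLine_contractLine (hG : isColored G)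
    (hnm : G.edge 0 n = some m) {p : V × V} (hp : isLine (contractLine G n m) p) :
    isLine G p := by
  have := hG.symm hnm
  have hinj : ∀ (u v w : V), G.edge 0 u = some w → G.edge 0 v = some w → u = v :=
    fun _ _ _ => hG.inj
  unfold isLine at *
  rw [contractLine_edge, reconnect_eq_some_iff] at hp
  grind

theorem contractLine_comm (hG : ∀ c, IsMatching (G.edge c)) {p q : V × V}
    (hp : p.1 ≠ p.2) (hq : q.1 ≠ q.2) (hpq : LinesDisjoint p q) :
    contractLine (contractLine G p.1 p.2) q.1 q.2 =
      contractLine (contractLine G q.1 q.2) p.1 p.2 := by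
  obtain ⟨h₁, h₂, h₃, h₄⟩ := hpq
  unfold contractLine
  congr 1
  · ext a
    simp only [Finset.mem_sdiff, Finset.mem_insert, Finset.mem_singleton]
    tauto
  · funext c
    exact reconnect_reconnect_comm (hG c) hp hq h₁ h₂ h₃ h₄

theorem crossedPair_contractLine_of_ne (hG : isColored G) (hnm : G.edge 0 n = some m)
    {a b : V} (han : a ≠ n) (ham : a ≠ m) (hb : faceStep G c a = some b)
    (hbn : b ≠ n) (hbm : b ≠ m) :
    crossedPair (contractLine G n m) c a = crossedPair G c a := by
  obtain ⟨x, hx, hxb⟩ := faceStep_eq_some_iff.1 hb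
  have := hG.symm hnm
  have hinj : ∀ c' (u v w : V), G.edge c' u = some w → G.edge c' v = some w → u = v :=
    fun _ _ _ _ => hG.inj
  refine Option.ext fun xy => ?_
  simp only [crossedPair_eq_some_iff, contractLine_edge, reconnect_eq_some_iff]
  grind

theorem crossedPair_contractLine_of_mem (hG : isColored G) (hnm : G.edge 0 n = some m)
    {a b : V} (han : a ≠ n) (ham : a ≠ m) (hb : faceStep G c a = some b)
    (hbnm : b = n ∨ b = m) :
    crossedPair (contractLine G n m) c a = crossedPair G c b := by
  obtain ⟨x, hx, hxb⟩ := faceStep_eq_some_iff.1 hb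
  have := hG.symm hnm
  have hsymm : ∀ c' (u v : V), G.edge c' u = some v → G.edge c' v = some u := hG.1
  have hirr : ∀ c' (u : V), G.edge c' u ≠ some u := hG.2.2.1
  have hinj : ∀ c' (u v w : V), G.edge c' u = some w → G.edge c' v = some w → u = v :=
    fun _ _ _ _ => hG.inj
  refine Option.ext fun xy => ?_
  simp only [crossedPair_eq_some_iff, contractLine_edge, reconnect_eq_some_iff]
  grind

theorem ne_of_crossedPair_contractLine {a : V} {xy : V × V}
    (h : crossedPair (contractLine G n m) c a = some xy) :
    (a ≠ n ∧ a ≠ m) ∧ (xy.1 ≠ n ∧ xy.1 ≠ m) ∧ xy.2 ≠ n ∧ xy.2 ≠ m := by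
  simp only [crossedPair_eq_some_iff, contractLine_edge, reconnect_eq_some_iff] at h
  grind

theorem faceStep_ne_none_of_contractLine (hG : isColored G) (hnm : G.edge 0 n = some m)
    {a : V} (h : faceStep (contractLine G n m) c a ≠ none) :
    faceStep G c a ≠ none := by
  have := hG.symm hnm
  simp only [ne_eq, faceStep, Option.bind_eq_none_iff, contractLine_edge, not_forall] at h ⊢
  obtain ⟨x, hx, hx0⟩ := h
  obtain ⟨y, hy⟩ := Option.ne_none_iff_exists'.1 hx0
  rw [reconnect_eq_some_iff] at hx hy
  grind

theorem exists_iterStep_contractLine (hG : isColored G) (hnm : G.edge 0 n = some m) {k : ℕ}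
    {a b : V} (han : a ≠ n) (ham : a ≠ m) (hab : iterStep G c k a = some b) (hbn : b ≠ n)
    (hbm : b ≠ m) :
    ∃ k', (0 < k → 0 < k') ∧ iterStep (contractLine G n m) c k' a = some b ∧
      ∀ xy, WalkCrosses G c a k xy → ¬ pairMatch xy (n, m) →
        WalkCrosses (contractLine G n m) c a k' xy := by
  induction k using Nat.strong_induction_on generalizing a with
  | _ k ih =>
  rcases k with _ | k
  · exact ⟨0, by omega, hab, fun xy ⟨j, hj, _⟩ => absurd hj (Nat.not_lt_zero j)⟩
  obtain ⟨a₁, ha₁, hrest⟩ := iterStep_succ_eq_some_iff.1 hab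
  by_cases ha₁L : a₁ = n ∨ a₁ = m
  · rcases k with _ | k
    · obtain rfl := Option.some_inj.1 hrest
      tauto
    obtain ⟨a₂, ha₂, hrest⟩ := iterStep_succ_eq_some_iff.1 hrest
    obtain ⟨xy₂, hxy₂, rfl⟩ := exists_crossedPair_of_faceStep ha₂
    have hcp := crossedPair_contractLine_of_mem hG hnm han ham ha₁ ha₁L
    obtain ⟨-, ha₂n, ha₂m⟩ :=
      crossedPair_ne_of_faceStep_mem hG hnm han ham ha₁ ha₁L hxy₂
    obtain ⟨k', -, hk', hW⟩ := ih k (by omega) ha₂n ha₂m hrest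
    have hstep : faceStep (contractLine G n m) c a = some xy₂.2 :=
      faceStep_of_crossedPair (hcp.trans hxy₂)
    refine ⟨k' + 1, fun _ => by omega, by rwa [iterStep_succ_of_faceStep hstep], ?_⟩
    intro xy h hxy
    rw [walkCrosses_succ_iff hstep, hcp]
    rw [walkCrosses_succ_iff ha₁, walkCrosses_succ_iff ha₂] at h
    rcases h with h | h | h
    · obtain ⟨xy₁, h₁, rfl⟩ := exists_crossedPair_of_faceStep ha₁
      exact absurd (Option.some_inj.1 (h₁.symm.trans h) ▸
        pairMatch_of_crossedPair_snd hG hnm h₁ ha₁L) hxy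
    · exact Or.inl h
    · exact Or.inr (hW xy h hxy)
  · obtain ⟨ha₁n, ha₁m⟩ : a₁ ≠ n ∧ a₁ ≠ m := by tauto
    have hcp := crossedPair_contractLine_of_ne hG hnm han ham ha₁ ha₁n ha₁m
    obtain ⟨k', -, hk', hW⟩ := ih k (by omega) ha₁n ha₁m hrest
    have hstep : faceStep (contractLine G n m) c a = some a₁ := by
      rwa [faceStep_eq_map_crossedPair, hcp, ← faceStep_eq_map_crossedPair]
    refine ⟨k' + 1, fun _ => by omega, by rwa [iterStep_succ_of_faceStep hstep], ?_⟩
    intro xy h hxy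
    rw [walkCrosses_succ_iff hstep, hcp]
    rw [walkCrosses_succ_iff ha₁] at h
    exact h.imp_right (hW xy · hxy)

theorem exists_closedFace_contractLine (hG : isColored G) (hnm : G.edge 0 n = some m)
    {a : V} {k : ℕ} (hk0 : 0 < k) (hk : iterStep G c k a = some a) {r : V × V}
    (hr : WalkCrosses G c a k r) (hrL : ¬ pairMatch r (n, m)) :
    ∃ a' k', ClosedFace (contractLine G n m) c a' k' ∧
      ∀ xy, WalkCrosses G c a k xy → ¬ pairMatch xy (n, m) →
        WalkCrosses (contractLine G n m) c a' k' xy := by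
  obtain ⟨j, -, x, hx, hxr⟩ := hr
  have hr₂ : r.2 ≠ n ∧ r.2 ≠ m := by
    by_contra h
    exact hrL (pairMatch_of_crossedPair_snd hG hnm hxr (by tauto))
  have ha' : iterStep G c (j + 1) a = some r.2 :=
    iterStep_succ_eq_some_iff'.2 ⟨x, hx, faceStep_of_crossedPair hxr⟩
  obtain ⟨k', hk'0, hk', hW⟩ := exists_iterStep_contractLine hG hnm hr₂.1 hr₂.2
    (iterStep_period_of_mem hk ha') hr₂.1 hr₂.2
  exact ⟨r.2, k', ⟨hk'0 hk0, hk'⟩, fun xy hxy hL => hW xy (hxy.of_mem hk0 hk ha') hL⟩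

section Holonomy

variable {Γ : Type} [Group Γ] {S : Finset (V × V)} {h : V × V → Γ}

theorem holFrom_succ_of_faceStep {H : PreGraph d V} {k : ℕ} {a b : V}
    (hab : faceStep H c a = some b) :
    holFrom H S h c (k + 1) a = crossVal H S h c a * holFrom H S h c k b := by
  simp only [holFrom, hab]

theorem crossVal_eq_one_of_pairMatch (hS : (n, m) ∈ S) (hS' : (m, n) ∉ S) (hh : h (n, m) = 1)
    {a : V} {xy : V × V} (hxy : crossedPair G c a = some xy) (hp : pairMatch xy (n, m)) :
    crossVal G S h c a = 1 := by
  rcases hp with rfl | rfl <;> simp [crossVal, hxy, hS, hS', hh]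

theorem crossVal_contractLine {a b : V}
    (hcp : crossedPair (contractLine G n m) c a = crossedPair G c b) :
    crossVal (contractLine G n m) (S.erase (n, m)) h c a = crossVal G S h c b := by
  unfold crossVal
  rw [← hcp]
  cases hxy : crossedPair (contractLine G n m) c a with
  | none => rfl
  | some xy =>
    obtain ⟨-, ⟨hxn, -⟩, hyn, -⟩ := ne_of_crossedPair_contractLine hxy
    have h₁ : (n, m) ≠ xy := fun h => hxn (congrArg Prod.fst h).symm
    have h₂ : (n, m) ≠ (xy.2, xy.1) := fun h => hyn (congrArg Prod.fst h).symm
    simp only [Finset.mem_erase, ne_eq, h₁.symm, h₂.symm, not_false_eq_true, true_and]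

theorem exists_iterStep_of_contractLine (hG : isColored G) (hnm : G.edge 0 n = some m)
    (hS : (n, m) ∈ S) (hS' : (m, n) ∉ S) (hh : h (n, m) = 1) {k : ℕ} {a b : V} (han : a ≠ n)
    (ham : a ≠ m) (hab : iterStep (contractLine G n m) c k a = some b) :
    ∃ k', k ≤ k' ∧ iterStep G c k' a = some b ∧
      holFrom G S h c k' a = holFrom (contractLine G n m) (S.erase (n, m)) h c k a ∧
      ∀ xy, WalkCrosses G c a k' xy →
        pairMatch xy (n, m) ∨ WalkCrosses (contractLine G n m) c a k xy := by
  induction k generalizing a with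
  | zero => exact ⟨0, le_rfl, hab, rfl, fun xy ⟨j, hj, _⟩ => absurd hj (Nat.not_lt_zero j)⟩
  | succ k ih =>
  obtain ⟨a₁, ha₁, hrest⟩ := iterStep_succ_eq_some_iff.1 hab
  obtain ⟨xy₁, hxy₁, rfl⟩ := exists_crossedPair_of_faceStep ha₁
  obtain ⟨-, -, ha₁n, ha₁m⟩ := ne_of_crossedPair_contractLine hxy₁
  obtain ⟨k', hkk', hk', hhol, hW⟩ := ih ha₁n ha₁m hrest
  obtain ⟨b₀, hb₀⟩ := Option.ne_none_iff_exists'.1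
    (faceStep_ne_none_of_contractLine hG hnm (c := c) (a := a) (by simp [ha₁]))
  rw [holFrom_succ_of_faceStep ha₁, ← hhol]
  by_cases hb₀L : b₀ = n ∨ b₀ = m
  · have hcp := crossedPair_contractLine_of_mem hG hnm han ham hb₀ hb₀L
    have hstep : faceStep G c b₀ = some xy₁.2 := faceStep_of_crossedPair (hcp ▸ hxy₁)
    obtain ⟨xy₀, hxy₀, rfl⟩ := exists_crossedPair_of_faceStep hb₀
    have hL := pairMatch_of_crossedPair_snd hG hnm hxy₀ hb₀L
    refine ⟨k' + 2, by omega, ?_, ?_, fun xy hW' => ?_⟩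
    · rwa [iterStep_succ_of_faceStep hb₀, iterStep_succ_of_faceStep hstep]
    · rw [holFrom_succ_of_faceStep hb₀, holFrom_succ_of_faceStep hstep,
        crossVal_eq_one_of_pairMatch hS hS' hh hxy₀ hL, one_mul, crossVal_contractLine hcp]
    · rw [walkCrosses_succ_iff hb₀, walkCrosses_succ_iff hstep] at hW'
      rw [walkCrosses_succ_iff ha₁, hcp]
      rcases hW' with h' | h' | h'
      · exact Or.inl (Option.some_inj.1 (hxy₀.symm.trans h') ▸ hL)
      · exact Or.inr (Or.inl h')
      · exact (hW xy h').imp_right Or.inr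
  · obtain ⟨hb₀n, hb₀m⟩ : b₀ ≠ n ∧ b₀ ≠ m := by tauto
    have hcp := crossedPair_contractLine_of_ne hG hnm han ham hb₀ hb₀n hb₀m
    obtain rfl : b₀ = xy₁.2 := by
      rw [faceStep_eq_map_crossedPair, ← hcp, hxy₁] at hb₀
      exact (Option.some_inj.1 hb₀).symm
    refine ⟨k' + 1, by omega, by rwa [iterStep_succ_of_faceStep hb₀], ?_, fun xy hW' => ?_⟩
    · rw [holFrom_succ_of_faceStep hb₀, crossVal_contractLine hcp]
    · rw [walkCrosses_succ_iff hb₀] at hW'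
      rw [walkCrosses_succ_iff ha₁, hcp]
      exact hW'.elim (Or.inr ∘ Or.inl) fun h' => (hW xy h').imp_right Or.inr

theorem ClosedFaceIn.exists_of_contractLine (hG : isColored G) (hnm : G.edge 0 n = some m)
    (hS : (n, m) ∈ S) (hS' : (m, n) ∉ S) (hh : h (n, m) = 1) {a : V} {k : ℕ}
    (hface : ClosedFaceIn (contractLine G n m) (S.erase (n, m)) c a k) :
    ∃ k', ClosedFaceIn G S c a k' ∧
      holFrom G S h c k' a = holFrom (contractLine G n m) (S.erase (n, m)) h c k a := by
  obtain ⟨⟨hk0, hk⟩, hin⟩ := closedFaceIn_iff.1 hface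
  obtain ⟨xy, hxy⟩ := exists_crossedPair_of_mem hk0 hk (j := 0) rfl
  obtain ⟨⟨han, ham⟩, -⟩ := ne_of_crossedPair_contractLine hxy
  obtain ⟨k', hkk', hk', hhol, hW⟩ :=
    exists_iterStep_of_contractLine hG hnm hS hS' hh han ham hk
  refine ⟨k', closedFaceIn_iff.2 ⟨⟨by omega, hk'⟩, fun xy hxy => ?_⟩, hhol⟩
  rcases hW xy hxy with hL | hxy'
  · exact ⟨(n, m), hS, hL⟩
  · obtain ⟨q, hq, hp⟩ := hin xy hxy'
    exact ⟨q, Finset.mem_of_mem_erase hq, hp⟩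

theorem closedFaceIn_loop (hG : isColored G) (hnm : G.edge 0 n = some m)
    (hshared : G.edge c n = some m) (hS : (n, m) ∈ S) :
    ClosedFaceIn G S c m 1 ∧ holFrom G S h c 1 m = h (n, m) := by
  have hxy : crossedPair G c m = some (n, m) :=
    crossedPair_eq_some_iff.2 ⟨hG.symm hshared, hnm⟩
  have hstep : faceStep G c m = some m := faceStep_of_crossedPair hxy
  have hloop : ClosedFace G c m 1 := ⟨Nat.one_pos, by rw [iterStep_succ_of_faceStep hstep]; rfl⟩
  refine ⟨closedFaceIn_iff.2 ⟨hloop, ?_⟩, ?_⟩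
  · rintro xy ⟨j, hj, x, hx, hxy'⟩
    obtain rfl : j = 0 := by omega
    obtain rfl : m = x := Option.some_inj.1 hx
    exact ⟨(n, m), hS, Option.some_inj.1 (hxy'.symm.trans hxy) ▸ pairMatch.refl _⟩
  · simp [holFrom, hstep, crossVal, hxy, hS]

end Holonomy

end Contraction

section Connectedness

variable [DecidableEq V] {G : PreGraph d V} {n m : V}

theorem eq_of_shareCount {c c' : Fin (d + 1)} (hsh : d - 1 ≤ shareCount G n m) (hc : c ≠ 0)
    (hc' : c' ≠ 0) (hfree : G.edge c n ≠ some m) (hfree' : G.edge c' n ≠ some m) :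
    c = c' := by
  by_contra hne
  have hsub : (Finset.univ.filter fun z : Fin (d + 1) => z ≠ 0 ∧ G.edge z n = some m) ⊆
      Finset.univ \ {0, c, c'} := by
    intro z hz
    simp only [Finset.mem_filter, Finset.mem_univ, true_and] at hz
    simp only [Finset.mem_sdiff, Finset.mem_univ, Finset.mem_insert, Finset.mem_singleton,
      true_and]
    grind
  have hcard := Finset.card_le_card hsub
  rw [Finset.card_univ_sdiff, Fintype.card_fin, Finset.card_insert_of_notMem (by grind),
    Finset.card_pair hne] at hcard
  unfold shareCount at hsh
  have := c.pos_iff_ne_zero.2 hc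
  have := c.isLt
  omega

def attachedClass (G : PreGraph d V) (n m : V) (x : V × V) : Prop :=
  ∃ c b w, c ≠ 0 ∧ G.edge c n = some b ∧ b ≠ m ∧ G.edge 0 b = some w ∧
    Relation.EqvGen (WholeFaceRel (contractLine G n m)) (b, w) x

/- The class in `G / (n, m)` that a line of `G` is sent to; `(n, m)` itself goes to the class of
the line after `n` along its free colour, which is unique by the dipole condition. -/
def contractedClass (G : PreGraph d V) (n m : V) (r x : V × V) : Prop :=
  (pairMatch r (n, m) ∧ attachedClass G n m x) ∨
    (¬ pairMatch r (n, m) ∧ Relation.EqvGen (WholeFaceRel (contractLine G n m)) r x)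

section Faces

variable {c : Fin (d + 1)} {a : V} {k : ℕ}

theorem wholeFaceRel_contractLine (hG : isColored G) (hnm : G.edge 0 n = some m) (hc : c ≠ 0)
    (hface : ClosedFace G c a k) {r s : V × V} (hr : FaceCrosses G c a k r)
    (hs : FaceCrosses G c a k s) (hrL : ¬ pairMatch r (n, m)) (hsL : ¬ pairMatch s (n, m)) :
    WholeFaceRel (contractLine G n m) r s := by
  obtain ⟨xr, hWr, hpr⟩ := faceCrosses_iff.1 hr
  obtain ⟨xs, hWs, hps⟩ := faceCrosses_iff.1 hs
  have hxrL : ¬ pairMatch xr (n, m) := fun h => hrL (hpr.symm.trans h)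
  have hxsL : ¬ pairMatch xs (n, m) := fun h => hsL (hps.symm.trans h)
  obtain ⟨a', k', hface', hW⟩ := exists_closedFace_contractLine hG hnm hface.1 hface.2 hWr hxrL
  exact ⟨c, hc, a', k', hface', faceCrosses_iff.2 ⟨xr, hW xr hWr hxrL, hpr⟩,
    faceCrosses_iff.2 ⟨xs, hW xs hWs hxsL, hps⟩⟩

theorem attachedClass_eq (hG : isColored G) (hnm : G.edge 0 n = some m)
    (hsh : d - 1 ≤ shareCount G n m) (hc : c ≠ 0) (hface : ClosedFace G c a k) {r s : V × V}
    (hr : FaceCrosses G c a k r) (hs : FaceCrosses G c a k s) (hrL : pairMatch r (n, m))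
    (hsL : ¬ pairMatch s (n, m)) :
    attachedClass G n m = Relation.EqvGen (WholeFaceRel (contractLine G n m)) s := by
  obtain ⟨xr, hWr, hpr⟩ := faceCrosses_iff.1 hr
  obtain ⟨xs, hWs, hps⟩ := faceCrosses_iff.1 hs
  obtain ⟨b, w, hb, hbm, hw, xy, hWxy, hpxy⟩ := exists_free_line_of_walkCrosses hG hnm hc
    hface.1 hface.2 hWr (hpr.trans hrL) hWs (fun h => hsL (hps.symm.trans h))
  have hbw : ¬ pairMatch (b, w) (n, m) := not_pairMatch_of_fst_ne (hG.ne hb).symm hbm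
  have hbws : Relation.EqvGen (WholeFaceRel (contractLine G n m)) (b, w) s :=
    .rel _ _ (wholeFaceRel_contractLine hG hnm hc hface (faceCrosses_iff.2 ⟨xy, hWxy, hpxy⟩)
      hs hbw hsL)
  rw [← eqvGen_eq_of_eqvGen hbws]
  funext x
  refine propext ⟨fun ⟨c', b', w', hc', hb', hb'm, hw', hE⟩ => ?_,
    fun hE => ⟨c, b, w, hc, hb, hbm, hw, hE⟩⟩
  obtain rfl : c = c' := eq_of_shareCount hsh hc hc' (by rwa [hb, ne_eq, Option.some_inj])
    (by rwa [hb', ne_eq, Option.some_inj])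
  obtain rfl : b = b' := Option.some_inj.1 (hb.symm.trans hb')
  obtain rfl : w = w' := Option.some_inj.1 (hw.symm.trans hw')
  exact hE

end Faces

theorem contractedClass_eq_of_wholeFaceRel (hG : isColored G) (hnm : G.edge 0 n = some m)
    (hsh : d - 1 ≤ shareCount G n m) {r s : V × V} (h : WholeFaceRel G r s) :
    contractedClass G n m r = contractedClass G n m s := by
  obtain ⟨c, hc, a, k, hface, hr, hs⟩ := h
  unfold contractedClass
  by_cases hrL : pairMatch r (n, m) <;> by_cases hsL : pairMatch s (n, m) <;>
    simp only [hrL, hsL, true_and, false_and, not_true_eq_false, not_false_eq_true, or_false,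
      false_or]
  · rw [attachedClass_eq hG hnm hsh hc hface hr hs hrL hsL]
  · rw [attachedClass_eq hG hnm hsh hc hface hs hr hsL hrL]
  · exact eqvGen_eq_of_eqvGen (.rel _ _ (wholeFaceRel_contractLine hG hnm hc hface hr hs hrL hsL))

theorem graphConnected_contractLine (hG : isColored G) (hnm : G.edge 0 n = some m)
    (hsh : d - 1 ≤ shareCount G n m) (hconn : GraphConnected G) :
    GraphConnected (contractLine G n m) := by
  have hG' := hG.contractLine hnm
  have hoff : ∀ p, isLine (contractLine G n m) p → isLine G p ∧ ¬ pairMatch p (n, m) :=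
    fun p hp => by
      obtain ⟨-, hpn, hpm⟩ := mem_verts_contractLine.1 (hG'.2.1 0 p.1 p.2 hp).1
      exact ⟨isLine_of_isLine_contractLine hG hnm hp, not_pairMatch_of_fst_ne hpn hpm⟩
  intro p q hp hq
  obtain ⟨hpG, hpL⟩ := hoff p hp
  obtain ⟨hqG, hqL⟩ := hoff q hq
  have := congrFun (eq_of_eqvGen
    (fun _ _ h => contractedClass_eq_of_wholeFaceRel hG hnm hsh h) (hconn p q hpG hqG)) q
  simp only [contractedClass, hpL, hqL, false_and, not_false_eq_true, true_and, false_or,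
    eq_iff_iff] at this
  exact this.2 (.refl q)

end Connectedness

section ContractionSequences

variable [DecidableEq V]

def ContractionSeq (P : PreGraph d V → V → V → Prop) : PreGraph d V → List (V × V) → Prop
  | _, [] => True
  | G, p :: r => isLine G p ∧ P G p.1 p.2 ∧ ContractionSeq P (contractLine G p.1 p.2) r

variable {P : PreGraph d V → V → V → Prop}

theorem ContractionSeq.mono {Q : PreGraph d V → V → V → Prop}
    (hPQ : ∀ G n m, P G n m → Q G n m) :
    ∀ {G : PreGraph d V} {l : List (V × V)}, ContractionSeq P G l → ContractionSeq Q G l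
  | _, [], _ => trivial
  | _, _ :: _, ⟨hp, hP, hr⟩ => ⟨hp, hPQ _ _ _ hP, hr.mono hPQ⟩

theorem meloSteps_iff {G : PreGraph d V} {l : List (V × V)} :
    MeloSteps G l ↔ ContractionSeq (fun G n m => d - 1 ≤ shareCount G n m) G l := by
  induction l generalizing G with
  | nil => exact Iff.rfl
  | cons p r ih => exact and_congr_right' (and_congr_right' ih)

theorem ContractionSeq.isLine_of_mem :
    ∀ {G : PreGraph d V} {l : List (V × V)}, isColored G → ContractionSeq P G l →
      ∀ q ∈ l, isLine G q
  | _, [], _, _, _, hq => absurd hq List.not_mem_nil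
  | _, p :: r, hG, ⟨hp, _, hr⟩, q, hq => by
    rcases List.mem_cons.1 hq with rfl | hq
    · exact hp
    · exact isLine_of_isLine_contractLine hG hp (hr.isLine_of_mem (hG.contractLine hp) q hq)

theorem ContractionSeq.pairwise_linesDisjoint :
    ∀ {G : PreGraph d V} {l : List (V × V)}, isColored G → ContractionSeq P G l →
      l.Pairwise LinesDisjoint
  | _, [], _, _ => List.Pairwise.nil
  | G, p :: r, hG, ⟨hp, _, hr⟩ => by
    have hG' := hG.contractLine hp
    refine List.Pairwise.cons (fun q hq => ?_) (hr.pairwise_linesDisjoint hG')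
    obtain ⟨hq₁, hq₂⟩ := hG'.2.1 0 q.1 q.2 (hr.isLine_of_mem hG' q hq)
    obtain ⟨-, hq₁⟩ := mem_verts_contractLine.1 hq₁
    obtain ⟨-, hq₂⟩ := mem_verts_contractLine.1 hq₂
    exact ⟨hq₁.1.symm, hq₂.1.symm, hq₁.2.symm, hq₂.2.symm⟩

theorem contractList_eq_of_perm {l₁ l₂ : List (V × V)} (hperm : l₁.Perm l₂) :
    ∀ G : PreGraph d V, (∀ c, IsMatching (G.edge c)) → l₁.Pairwise LinesDisjoint →
      (∀ p ∈ l₁, p.1 ≠ p.2) → contractList G l₁ = contractList G l₂ := by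
  induction hperm with
  | nil => exact fun _ _ _ _ => rfl
  | cons p _ ih =>
    intro G hG hdisj hne
    exact ih _ (fun c => (hG c).reconnect (hne p List.mem_cons_self))
      (List.pairwise_cons.1 hdisj).2 fun q hq => hne q (List.mem_cons_of_mem p hq)
  | swap p q l =>
    intro G hG hdisj hne
    exact congrArg (contractList · l) (contractLine_comm hG (hne q (by simp)) (hne p (by simp))
      ((List.pairwise_cons.1 hdisj).1 p List.mem_cons_self))
  | trans h₁₂ _ ih₁₂ ih₂₃ =>
    intro G hG hdisj hne
    rw [ih₁₂ G hG hdisj hne]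
    exact ih₂₃ G hG ((h₁₂.pairwise_iff LinesDisjoint.symm).1 hdisj) fun p hp =>
      hne p (h₁₂.mem_iff.2 hp)

theorem ContractionSeq.contractList_eq_of_perm {G : PreGraph d V} {l L : List (V × V)}
    (hG : isColored G) (hL : ContractionSeq P G L) (hperm : l.Perm L) :
    contractList G l = contractList G L :=
  _root_.contractList_eq_of_perm hperm G hG.isMatching
    ((hperm.pairwise_iff LinesDisjoint.symm).2 (hL.pairwise_linesDisjoint hG))
    fun p hp => hG.ne (hL.isLine_of_mem hG p (hperm.mem_iff.1 hp))

theorem ContractionSeq.eq_one_of_flat {Γ : Type} [Group Γ] (h : V × V → Γ) :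
    ∀ {G : PreGraph d V} {l : List (V × V)}, isColored G → ContractionSeq ColoredAdj G l →
      (∀ c : Fin (d + 1), c ≠ 0 → ∀ a k, ClosedFaceIn G l.toFinset c a k →
        holFrom G l.toFinset h c k a = 1) →
      ∀ p ∈ l, h p = 1
  | _, [], _, _, _, _, hp => absurd hp List.not_mem_nil
  | G, (n, m) :: r, hG, hl, hflat, p, hp => by
    have hdisj : ∀ q ∈ r, LinesDisjoint (n, m) q :=
      (List.pairwise_cons.1 (hl.pairwise_linesDisjoint hG)).1
    obtain ⟨hnm, ⟨c₀, hc₀, hshared⟩, hr⟩ := hl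
    have hS : (n, m) ∈ ((n, m) :: r).toFinset := by simp
    have hS' : (m, n) ∉ ((n, m) :: r).toFinset := by
      simp only [List.toFinset_cons, Finset.mem_insert, Prod.mk.injEq, List.mem_toFinset]
      rintro (⟨rfl, -⟩ | hmn)
      exacts [hG.ne hnm rfl, (hdisj _ hmn).2.1 rfl]
    have hh : h (n, m) = 1 := by
      obtain ⟨hface, hhol⟩ := closedFaceIn_loop (h := h) hG hnm hshared hS
      rw [← hhol]
      exact hflat c₀ hc₀ m 1 hface
    have herase : ((n, m) :: r).toFinset.erase (n, m) = r.toFinset := by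
      rw [List.toFinset_cons, Finset.erase_insert]
      exact fun hnm' => (hdisj _ (List.mem_toFinset.1 hnm')).1 rfl
    rcases List.mem_cons.1 hp with rfl | hp
    · exact hh
    refine eq_one_of_flat h (hG.contractLine hnm) hr (fun c hc a k hface => ?_) p hp
    rw [← herase] at hface ⊢
    obtain ⟨k', hface', hhol⟩ := hface.exists_of_contractLine hG hnm hS hS' hh
    rw [← hhol]
    exact hflat c hc a k' hface'

theorem ContractionSeq.graphConnected {G : PreGraph d V} {l : List (V × V)} (hG : isColored G)
    (hconn : GraphConnected G) (hl : ContractionSeq (fun G n m => d - 1 ≤ shareCount G n m) G l) :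
    GraphConnected (contractList G l) := by
  induction l generalizing G with
  | nil => exact hconn
  | cons p r ih =>
    obtain ⟨hp, hsh, hr⟩ := hl
    exact ih (hG.contractLine hp) (graphConnected_contractLine hG hp hsh hconn) hr

theorem coloredAdj_of_shareCount_pos {G : PreGraph d V} {n m : V}
    (h : 0 < shareCount G n m) : ColoredAdj G n m := by
  obtain ⟨c, hc⟩ := Finset.card_pos.1 h
  exact ⟨c, (Finset.mem_filter.1 hc).2⟩

theorem ContractionSeq.coloredAdj_of_rank_one {G : PreGraph 1 V} {L : List (V × V)}
    {Q : PreGraph 1 V → V → V → Prop} (hG : isColored G) (hL : ContractionSeq Q G L)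
    (hbub : ∀ p ∈ L, ∀ q ∈ L, SameBubble G p.1 q.1)
    (hbub' : ∀ p ∈ L, SameBubble G p.1 p.2) :
    ContractionSeq ColoredAdj G L := by
  rcases L with _ | ⟨⟨n, m⟩, r⟩
  · trivial
  have hdisj := (List.pairwise_cons.1 (hL.pairwise_linesDisjoint hG)).1
  obtain ⟨hnm, -, -⟩ := hL
  have hadj : G.edge 1 n = some m :=
    (sameBubble_rank_one hG (hbub' _ List.mem_cons_self)).resolve_left (hG.ne hnm)
  obtain rfl : r = [] := List.eq_nil_iff_forall_not_mem.2 fun q hq => by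
    rcases sameBubble_rank_one hG (hbub _ List.mem_cons_self q (List.mem_cons_of_mem _ hq))
      with h | h
    exacts [(hdisj q hq).1 h, (hdisj q hq).2.2.1 (Option.some_inj.1 (hadj.symm.trans h))]
  exact ⟨hnm, ⟨1, one_ne_zero, hadj⟩, trivial⟩

theorem IsMelopole.exists_contractionSeq_coloredAdj {G : PreGraph d V} {S : Finset (V × V)}
    (hG : isColored G) (hS : IsMelopole G S) :
    ∃ L : List (V × V), L.toFinset = S ∧ ContractionSeq ColoredAdj G L := by
  obtain ⟨⟨p₀, hp₀⟩, hlines, hbub, hbub', -, L, -, rfl, hL⟩ := hS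
  simp only [List.mem_toFinset] at hp₀ hlines hbub hbub'
  rw [meloSteps_iff] at hL
  refine ⟨L, rfl, ?_⟩
  obtain hd | rfl | rfl : 2 ≤ d ∨ d = 1 ∨ d = 0 := by omega
  · exact hL.mono fun G n m h => coloredAdj_of_shareCount_pos (by omega)
  · exact hL.coloredAdj_of_rank_one hG hbub hbub'
  · exact absurd (eq_of_sameBubble_rank_zero (hbub' p₀ hp₀)) (hG.ne (hlines p₀ hp₀))

end ContractionSequences

/-- **Every melopole is tracial.**  Let `H` be a connected single-vertex subgraph of a
connected graph `G` whose `k` lines admit an ordering `l₁, …, l_k` such that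
`{l₁,…,l_i}/{l₁,…,l_{i-1}}` is a `d`-dipole for every `1 ≤ i ≤ k` (i.e. `H` is a
melopole).  Then `H` is contractible — any flat discrete connection on `H` is trivial:
if all holonomies around the internal faces of `H` are the identity then all line group
elements are the identity (the spanning tree to gauge-fix is empty since `H` is a
single-vertex tadpole graph) — and the contracted graph `G/H` is connected. -/
theorem melopole_is_tracial {d : ℕ} {V : Type} [DecidableEq V]
    (G : PreGraph d V) (hG : isColored G) (hGconn : GraphConnected G)
    (S : Finset (V × V)) (hS : IsMelopole G S) :
    (∀ (Γ : Type) [Group Γ], ∀ h : V × V → Γ,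
        (∀ c : Fin (d + 1), c ≠ 0 → ∀ a k, ClosedFaceIn G S c a k →
          holFrom G S h c k a = 1) →
        ∀ p ∈ S, h p = 1) ∧
    (∀ l : List (V × V), l.Nodup → l.toFinset = S →
        GraphConnected (contractList G l)) := by
  refine ⟨fun Γ _ h hflat p hp => ?_, fun l hl hlS => ?_⟩
  · obtain ⟨L, rfl, hL⟩ := hS.exists_contractionSeq_coloredAdj hG
    exact hL.eq_one_of_flat h hG hflat p (List.mem_toFinset.1 hp)
  · obtain ⟨-, -, -, -, -, L, hLnd, hLS, hL⟩ := hS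
    rw [meloSteps_iff] at hL
    have hperm := List.perm_of_nodup_nodup_toFinset_eq hl hLnd (hlS.trans hLS.symm)
    rw [hL.contractList_eq_of_perm hG hperm]
    exact hL.graphConnected hG hGconn
end
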